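/- arXiv:1204.1432 — 12 statements merged into one kernel-verified Lean document; each statement's English description precedes it below -/
import Mathlib

section
/- Let Ω be a topological space, let f, g : Ω → S¹ be continuous maps, and let k be a nonzero integer. If f is homotopic to the pointwise k-th power g^k, then there exists a continuous map f̃ : Ω → S¹ such that f = f̃^k; moreover f̃ can be chosen homotopic to g. -/
/-!
For `k ≠ 0` the power map `z ↦ z ^ k` is a covering map of the circle. Lifting a homotopy from
`g ^ k` to `f` through it, starting at the lift `g` of `g ^ k`, yields at time one a lift `f̃` of
`f`, and the lifted homotopy connects `g` to `f̃`.
-/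

open ContinuousMap unitInterval

theorem IsCoveringMap.exists_lift_homotopic {E X A : Type*} [TopologicalSpace E]
    [TopologicalSpace X] [TopologicalSpace A] {p : E → X} (cov : IsCoveringMap p)
    {f₀ f₁ : C(A, X)} (h : f₀.Homotopic f₁) (F₀ : C(A, E)) (hF₀ : ∀ a, p (F₀ a) = f₀ a) :
    ∃ F₁ : C(A, E), (∀ a, p (F₁ a) = f₁ a) ∧ F₀.Homotopic F₁ := by
  obtain ⟨H⟩ := h
  let L := cov.liftHomotopy H.toContinuousMap F₀ fun a => by simp [hF₀]
  have hL : ∀ x, p (L x) = H x := congr_fun (cov.liftHomotopy_lifts _ _ _)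
  let F₁ : C(A, E) := L.comp ((const A (1 : I)).prodMk (ContinuousMap.id A))
  let L' : F₀.Homotopy F₁ :=
    { toContinuousMap := L
      map_zero_left := cov.liftHomotopy_zero _ _ _
      map_one_left := fun _ => rfl }
  exact ⟨F₁, fun a => (hL (1, a)).trans (H.apply_one a), ⟨L'⟩⟩

/-- Let `Ω` be a topological space, let `f, g : Ω → S¹` be continuous maps, and let `k` be a
nonzero integer.  If `f` is homotopic to the pointwise `k`-th power `g^k`, then there exists a
continuous map `f̃ : Ω → S¹` such that `f = f̃^k`; moreover `f̃` can be chosen homotopic to `g`. -/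
theorem stmt0 {Ω : Type*} [TopologicalSpace Ω] (f g : C(Ω, Circle)) (k : ℤ) (hk : k ≠ 0)
    (h : f.Homotopic ⟨fun x => g x ^ k, (map_continuous g).zpow k⟩) :
    ∃ ftil : C(Ω, Circle), (∀ x, f x = ftil x ^ k) ∧ ftil.Homotopic g := by
  have : NeZero k := ⟨hk⟩
  obtain ⟨ftil, hpow, hg⟩ :=
    (Circle.isQuotientCoveringMap_zpow k).isCoveringMap.exists_lift_homotopic h.symm g
      fun _ => rfl
  exact ⟨ftil, fun x => (hpow x).symm, hg.symm⟩
end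

section
/- Let Ω be a topological space equipped with a continuous action of ℝⁿ, written (v, T) ↦ T − v, let β : ℝⁿ → ℝ be a linear functional, and let k ≥ 1 be an integer. If g : Ω → S¹ is continuous and satisfies g(T − v)^k = e^{2πiβ(v)} g(T)^k for all T ∈ Ω and v ∈ ℝⁿ, then g(T − v) = e^{2πiβ(v)/k} g(T) for all T ∈ Ω and v ∈ ℝⁿ; that is, g is a continuous eigenfunction with eigenvalue β/k. -/
/-!
Along the orbit line `t ↦ g (T - t • v)` the hypothesis says that `t ↦ g (T - t • v) ^ k` is
`t ↦ e^{2πi t β(v)} g(T) ^ k`. Dividing `g (T - t • v)` by `e^{2πi t β(v)/k} g(T)` gives a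
continuous map from `ℝ` into the finite, hence discrete, set of `k`-th roots of unity, which
is `1` at `t = 0` and therefore `1` everywhere since `ℝ` is connected.
-/

open Complex Polynomial

theorem IsPreconnected.constant_of_pow_eq_one {X R : Type*} [TopologicalSpace X] [CommRing R]
    [IsDomain R] [TopologicalSpace R] [T1Space R] {s : Set X} (hs : IsPreconnected s)
    {f : X → R} (hf : ContinuousOn f s) {k : ℕ} (hk : 0 < k) (hfk : ∀ x ∈ s, f x ^ k = 1)
    {x y : X} (hx : x ∈ s) (hy : y ∈ s) : f x = f y :=
  hs.constant_of_mapsTo (nthRootsFinset k (1 : R)).finite_toSet.isDiscrete hf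
    (fun z hz => (mem_nthRootsFinset hk 1).2 (hfk z hz)) hx hy

theorem Complex.eq_exp_mul_of_pow_eq_exp_mul {u : ℝ → ℂ} (hu : Continuous u) {k : ℕ} (hk : 0 < k)
    {c : ℂ} (h : ∀ t : ℝ, u t ^ k = exp (t * c) * u 0 ^ k) (t : ℝ) :
    u t = exp (t * c / k) * u 0 := by
  by_cases h0 : u 0 = 0
  · have ht := h t
    rw [h0, zero_pow hk.ne', mul_zero, pow_eq_zero_iff hk.ne'] at ht
    rw [ht, h0, mul_zero]
  have hk0 : (k : ℂ) ≠ 0 := Nat.cast_ne_zero.2 hk.ne'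
  set w : ℝ → ℂ := fun s => u s / (exp (s * c / k) * u 0) with hw_def
  have hw : Continuous w := hu.div (by fun_prop) fun s => mul_ne_zero (exp_ne_zero _) h0
  have hw_pow : ∀ s, w s ^ k = 1 := fun s => by
    rw [hw_def, div_pow, mul_pow, ← exp_nat_mul, mul_div_cancel₀ _ hk0, h s]
    exact div_self (mul_ne_zero (exp_ne_zero _) (pow_ne_zero k h0))
  have hw_zero : w 0 = 1 := by simp [hw_def, h0]
  have hw_t : w t = 1 := hw_zero ▸
    isPreconnected_univ.constant_of_pow_eq_one hw.continuousOn hk (fun s _ => hw_pow s)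
      (Set.mem_univ t) (Set.mem_univ 0)
  exact (div_eq_one_iff_eq (mul_ne_zero (exp_ne_zero _) h0)).1 hw_t

theorem stmt1_general {Ω : Type*} [TopologicalSpace Ω] (n : ℕ)
    (act : (Fin n → ℝ) → Ω → Ω)
    (hact_cont : Continuous fun p : (Fin n → ℝ) × Ω => act p.1 p.2)
    (hact_zero : ∀ T, act 0 T = T)
    (β : (Fin n → ℝ) →ₗ[ℝ] ℝ) (k : ℕ) (hk : 1 ≤ k)
    (g : C(Ω, Circle))
    (h : ∀ (T : Ω) (v : Fin n → ℝ),
      ((g (act v T) : ℂ)) ^ k = Complex.exp (2 * Real.pi * Complex.I * (β v : ℝ)) * (g T : ℂ) ^ k) :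
    ∀ (T : Ω) (v : Fin n → ℝ),
      (g (act v T) : ℂ) = Complex.exp (2 * Real.pi * Complex.I * ((β v : ℝ) / (k : ℝ))) * (g T : ℂ) := by
  intro T v
  set u : ℝ → ℂ := fun t => g (act (t • v) T) with hu_def
  have hu : Continuous u := by fun_prop
  have hu_zero : u 0 = g T := by simp [hu_def, hact_zero]
  have hu_pow (t : ℝ) : u t ^ k = exp (t * (2 * Real.pi * I * β v)) * u 0 ^ k := by
    rw [hu_zero, hu_def, h T (t • v), map_smul, smul_eq_mul]
    push_cast
    ring_nf
  calc (g (act v T) : ℂ) = u 1 := by simp only [hu_def, one_smul]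
    _ = exp (((1 : ℝ) : ℂ) * (2 * Real.pi * I * β v) / k) * u 0 :=
      Complex.eq_exp_mul_of_pow_eq_exp_mul hu hk hu_pow 1
    _ = _ := by
      rw [hu_zero]
      push_cast
      ring_nf

/-- Let `Ω` be a topological space equipped with a continuous action of `ℝⁿ`, written
`(v, T) ↦ T − v` (here `act v T`), let `β : ℝⁿ → ℝ` be a linear functional, and let `k ≥ 1`
be an integer.  If `g : Ω → S¹` is continuous and satisfies
`g(T − v)^k = e^{2πiβ(v)} g(T)^k` for all `T` and `v`, then
`g(T − v) = e^{2πiβ(v)/k} g(T)` for all `T` and `v`; that is, `g` is a continuous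
eigenfunction with eigenvalue `β/k`. -/
theorem stmt1 {Ω : Type*} [TopologicalSpace Ω] (n : ℕ)
    (act : (Fin n → ℝ) → Ω → Ω)
    (hact_cont : Continuous fun p : (Fin n → ℝ) × Ω => act p.1 p.2)
    (hact_zero : ∀ T, act 0 T = T)
    (hact_add : ∀ v w T, act (v + w) T = act v (act w T))
    (β : (Fin n → ℝ) →ₗ[ℝ] ℝ) (k : ℕ) (hk : 1 ≤ k)
    (g : C(Ω, Circle))
    (h : ∀ (T : Ω) (v : Fin n → ℝ),
      ((g (act v T) : ℂ)) ^ k = Complex.exp (2 * Real.pi * Complex.I * (β v : ℝ)) * (g T : ℂ) ^ k) :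
    ∀ (T : Ω) (v : Fin n → ℝ),
      (g (act v T) : ℂ) = Complex.exp (2 * Real.pi * Complex.I * ((β v : ℝ) / (k : ℝ))) * (g T : ℂ) :=
  stmt1_general n act hact_cont hact_zero β k hk g h
end

section
/- Let Ω be a topological space equipped with a continuous action of ℝⁿ, written (v, T) ↦ T − v. Let f : Ω → S¹ be continuous, let k ≥ 1 be an integer, let β : ℝⁿ → ℝ be a linear functional, and suppose there is a continuous eigenfunction g with eigenvalue β such that the pointwise power f^k is homotopic to g. Then there exists a continuous eigenfunction h with eigenvalue β/k such that h is homotopic to f. (This expresses that the cokernel of the map from eigenvalues to homotopy classes of circle-valued maps is torsion free.) -/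
/-!
Let `H` be a homotopy from `f ^ k` to `g`. Since `Circle.exp : ℝ → S¹` is a covering map, the
homotopy `H / f ^ k`, which starts at the constant map `1`, lifts to `Φ : I × Ω → ℝ` starting at
`0`, and `f · exp (Φ / k)` is then a homotopy from `f` to a `k`-th root `h` of `g`. For fixed `T`,
the map `v ↦ h (T - v) / (e(β v / k) · h T)` is continuous on the connected space `ℝⁿ`, takes
values in the finite set of `k`-th roots of unity and equals `1` at `v = 0`, so it is constantly
`1`: `h` is an eigenfunction with eigenvalue `β / k`.
-/

open scoped FourierTransform unitInterval

namespace Circle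

theorem finite_setOf_pow_eq_one {k : ℕ} (hk : k ≠ 0) : {z : Circle | z ^ k = 1}.Finite := by
  refine ((Polynomial.nthRoots k (1 : ℂ)).toFinset.finite_toSet.preimage
    coe_injective.injOn).subset fun z hz => ?_
  simp only [Set.mem_preimage, Finset.mem_coe, Multiset.mem_toFinset,
    Polynomial.mem_nthRoots (Nat.pos_of_ne_zero hk)]
  exact_mod_cast congrArg ((↑) : Circle → ℂ) hz

theorem eq_one_of_continuous_of_pow_eq_one {V : Type*} [TopologicalSpace V] [PreconnectedSpace V]
    {c : V → Circle} (hc : Continuous c) {k : ℕ} (hk : k ≠ 0) (hpow : ∀ v, c v ^ k = 1)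
    {v₀ : V} (h₀ : c v₀ = 1) (v : V) : c v = 1 :=
  h₀ ▸ isPreconnected_univ.constant_of_mapsTo (finite_setOf_pow_eq_one hk).isDiscrete
    hc.continuousOn (fun v _ => hpow v) trivial trivial

end Circle

namespace ContinuousMap

variable {X : Type*} [TopologicalSpace X]

theorem Homotopy.exists_circleExp_lift {u₀ u₁ : C(X, Circle)} (H : u₀.Homotopy u₁) :
    ∃ Φ : C(I × X, ℝ), (∀ x, Φ (0, x) = 0) ∧ ∀ p, Circle.exp (Φ p) = H p / u₀ p.2 := by
  let H' : C(I × X, Circle) := ⟨fun p => H p / u₀ p.2, by fun_prop⟩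
  have H'_zero : ∀ x, H' (0, x) = Circle.exp (const X 0 x) := by simp [H']
  exact ⟨Circle.isCoveringMap_exp.liftHomotopy H' (const X 0) H'_zero,
    Circle.isCoveringMap_exp.liftHomotopy_zero H' _ H'_zero,
    congr_fun (Circle.isCoveringMap_exp.liftHomotopy_lifts H' _ H'_zero)⟩

theorem Homotopic.exists_pow_eq {f g : C(X, Circle)} {k : ℕ} (hk : k ≠ 0)
    (hfg : (f ^ k).Homotopic g) : ∃ h : C(X, Circle), h ^ k = g ∧ h.Homotopic f := by
  obtain ⟨H⟩ := hfg
  obtain ⟨Φ, hΦ₀, hΦ⟩ := H.exists_circleExp_lift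
  let Ψ : C(I × X, Circle) := ⟨fun p => f p.2 * Circle.exp (Φ p / k), by fun_prop⟩
  have hΨ : ∀ p, Ψ p ^ k = H p := fun p => by
    have : Circle.exp (Φ p / k) ^ k = H p / f p.2 ^ k := by
      rw [← Circle.exp_natCast_mul, mul_div_cancel₀ _ (Nat.cast_ne_zero.mpr hk), hΦ, pow_apply]
    simp only [Ψ, coe_mk, mul_pow, this, mul_div_cancel]
  refine ⟨Ψ.curry 1, ext fun x => (hΨ (1, x)).trans (H.apply_one x), ⟨Homotopy.symm ?_⟩⟩
  exact
    { toContinuousMap := Ψ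
      map_zero_left := fun x => by simp [Ψ, hΦ₀]
      map_one_left := fun _ => rfl }

end ContinuousMap

section Eigenfunction

variable {V Ω : Type*}

def IsCircleEigenfunction (act : V → Ω → Ω) (β : V → ℝ) (h : Ω → Circle) : Prop :=
  ∀ T v, h (act v T) = 𝐞 (β v) * h T

theorem isCircleEigenfunction_iff {act : V → Ω → Ω} {β : V → ℝ} {h : Ω → Circle} :
    IsCircleEigenfunction act β h ↔
      ∀ T v, (h (act v T) : ℂ) = Complex.exp (2 * Real.pi * Complex.I * (β v : ℝ)) * h T := by
  refine forall₂_congr fun T v => ?_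
  rw [← Circle.coe_inj, Circle.coe_mul, Real.fourierChar_apply]
  push_cast
  ring_nf

theorem IsCircleEigenfunction.of_pow_eq [TopologicalSpace V] [PreconnectedSpace V] [Zero V]
    [TopologicalSpace Ω] {act : V → Ω → Ω} (hact_cont : ∀ T, Continuous fun v => act v T)
    (hact_zero : ∀ T, act 0 T = T) {β : V → ℝ} (hβ : Continuous β) (hβ_zero : β 0 = 0)
    {k : ℕ} (hk : k ≠ 0) {g h : C(Ω, Circle)} (hg : IsCircleEigenfunction act β g)
    (hpow : h ^ k = g) : IsCircleEigenfunction act (fun v => β v / k) h := by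
  intro T v
  let c : V → Circle := fun w => h (act w T) / (𝐞 (β w / k) * h T)
  have hc : Continuous c := by
    have := Real.continuous_fourierChar
    fun_prop
  have hc_pow : ∀ w, c w ^ k = 1 := fun w => by
    have : 𝐞 (β w / k) ^ k = 𝐞 (β w) := by
      rw [← AddChar.map_nsmul_eq_pow, nsmul_eq_mul, mul_div_cancel₀ _ (Nat.cast_ne_zero.mpr hk)]
    simp only [c, div_pow, mul_pow, this, ← ContinuousMap.pow_apply, hpow, hg T w, div_self']
  have hc_zero : c 0 = 1 := by simp [c, hact_zero, hβ_zero]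
  exact div_eq_one.mp (Circle.eq_one_of_continuous_of_pow_eq_one hc hk hc_pow hc_zero v)

end Eigenfunction

theorem stmt2_general {Ω : Type*} [TopologicalSpace Ω] (n : ℕ)
    (act : (Fin n → ℝ) → Ω → Ω)
    (hact_cont : Continuous fun p : (Fin n → ℝ) × Ω => act p.1 p.2)
    (hact_zero : ∀ T, act 0 T = T)
    (β : (Fin n → ℝ) →ₗ[ℝ] ℝ) (k : ℕ) (hk : 1 ≤ k)
    (f g : C(Ω, Circle))
    (hg : ∀ (T : Ω) (v : Fin n → ℝ),
      (g (act v T) : ℂ) = Complex.exp (2 * Real.pi * Complex.I * (β v : ℝ)) * (g T : ℂ))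
    (hfg : ContinuousMap.Homotopic ⟨fun x => f x ^ k, (map_continuous f).pow k⟩ g) :
    ∃ h : C(Ω, Circle),
      (∀ (T : Ω) (v : Fin n → ℝ),
        (h (act v T) : ℂ) =
          Complex.exp (2 * Real.pi * Complex.I * ((β v : ℝ) / (k : ℝ))) * (h T : ℂ)) ∧
      h.Homotopic f := by
  have hk₀ : k ≠ 0 := Nat.one_le_iff_ne_zero.mp hk
  obtain ⟨h, hpow, hhf⟩ := ContinuousMap.Homotopic.exists_pow_eq (f := f) hk₀ hfg
  have hh : IsCircleEigenfunction act (fun v => β v / k) h :=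
    (isCircleEigenfunction_iff.mpr hg).of_pow_eq (fun T => hact_cont.comp (.prodMk_left T))
      hact_zero β.continuous_of_finiteDimensional β.map_zero hk₀ hpow
  refine ⟨h, fun T v => ?_, hhf⟩
  exact_mod_cast isCircleEigenfunction_iff.mp hh T v

/-- Let `Ω` be a topological space with a continuous `ℝⁿ`-action `(v, T) ↦ T − v` (here `act v T`).
Let `f : Ω → S¹` be continuous, `k ≥ 1` an integer, `β : ℝⁿ → ℝ` a linear functional, and
suppose there is a continuous eigenfunction `g` with eigenvalue `β` such that the pointwise
power `f^k` is homotopic to `g`.  Then there exists a continuous eigenfunction `h` with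
eigenvalue `β/k` such that `h` is homotopic to `f`.  (Torsion freeness of the cokernel of the
map from eigenvalues to homotopy classes of circle-valued maps.) -/
theorem stmt2 {Ω : Type*} [TopologicalSpace Ω] (n : ℕ)
    (act : (Fin n → ℝ) → Ω → Ω)
    (hact_cont : Continuous fun p : (Fin n → ℝ) × Ω => act p.1 p.2)
    (hact_zero : ∀ T, act 0 T = T)
    (hact_add : ∀ v w T, act (v + w) T = act v (act w T))
    (β : (Fin n → ℝ) →ₗ[ℝ] ℝ) (k : ℕ) (hk : 1 ≤ k)
    (f g : C(Ω, Circle))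
    (hg : ∀ (T : Ω) (v : Fin n → ℝ),
      (g (act v T) : ℂ) = Complex.exp (2 * Real.pi * Complex.I * (β v : ℝ)) * (g T : ℂ))
    (hfg : ContinuousMap.Homotopic ⟨fun x => f x ^ k, (map_continuous f).pow k⟩ g) :
    ∃ h : C(Ω, Circle),
      (∀ (T : Ω) (v : Fin n → ℝ),
        (h (act v T) : ℂ) =
          Complex.exp (2 * Real.pi * Complex.I * ((β v : ℝ) / (k : ℝ))) * (h T : ℂ)) ∧
      h.Homotopic f :=
  stmt2_general n act hact_cont hact_zero β k hk f g hg hfg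
end

section
/- Let Ω be a nonempty compact metric space equipped with a continuous action of ℝⁿ, written (v, T) ↦ T − v. Let f be a continuous eigenfunction with eigenvalue β and g a continuous eigenfunction with eigenvalue β′, where β and β′ are linear functionals on ℝⁿ. If β ≠ β′, then f and g are not homotopic as maps Ω → S¹. (This expresses injectivity of the map θ from the group of eigenvalues to the first cohomology of Ω.) -/
/-!
If `f` and `g` were homotopic, the homotopy lifting property of the covering `Circle.exp : ℝ → S¹`
would give a continuous logarithm `φ : Ω → ℝ` of `g / f`, bounded because `Ω` is compact. Along an
orbit `t ↦ T₀ − t v` the quotient `g / f` winds as `exp (2π t (β' v − β v))`, so by uniqueness of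
lifts `φ` grows linearly in `t` there, which is impossible when `β v ≠ β' v`.
-/

open Real

theorem ContinuousMap.Homotopic.exists_circleExp_eq_div {X : Type*} [TopologicalSpace X]
    {f g : C(X, Circle)} (h : f.Homotopic g) :
    ∃ φ : C(X, ℝ), ∀ x, Circle.exp (φ x) = g x / f x := by
  obtain ⟨F⟩ := h
  let H : C(unitInterval × X, Circle) := ⟨fun p => F p / f p.2, by fun_prop⟩
  have H_zero : ∀ x, H (0, x) = Circle.exp (ContinuousMap.const X (0 : ℝ) x) := by
    simp [H]
  let Φ := Circle.isCoveringMap_exp.liftHomotopy H _ H_zero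
  refine ⟨Φ.comp ⟨fun x => (1, x), by fun_prop⟩, fun x => ?_⟩
  exact (congr_fun (Circle.isCoveringMap_exp.liftHomotopy_lifts H _ H_zero) (1, x)).trans
    (by simp [H])

theorem Circle.eq_exp_mul_of_coe_eq {u w : Circle} {θ : ℝ}
    (h : (u : ℂ) = Complex.exp (2 * π * Complex.I * θ) * w) :
    u = Circle.exp (2 * π * θ) * w := by
  ext
  rw [h, Circle.coe_mul, Circle.coe_exp]
  push_cast
  ring_nf

theorem eq_add_mul_of_circleExp_eq {ψ : ℝ → ℝ} (hψ : Continuous ψ) {c : ℝ} {u : Circle}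
    (h : ∀ t, Circle.exp (ψ t) = Circle.exp (c * t) * u) (t : ℝ) : ψ t = ψ 0 + c * t := by
  have hconst := Circle.isCoveringMap_exp.const_of_comp (g := fun t => ψ t - c * t)
    (by fun_prop) (fun a b => by simp [Circle.exp_sub, h]) t 0
  simp only [mul_zero, sub_zero] at hconst
  linarith

theorem not_bddAbove_range_add_mul {a c : ℝ} (hc : c ≠ 0) :
    ¬ BddAbove (Set.range fun t : ℝ => a + c * t) := by
  rintro ⟨M, hM⟩
  have : a + c * ((M + 1 - a) / c) ≤ M := hM ⟨_, rfl⟩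
  rw [mul_div_cancel₀ _ hc] at this
  linarith

theorem stmt3_general {Ω : Type*} [MetricSpace Ω] [CompactSpace Ω] [Nonempty Ω] (n : ℕ)
    (act : (Fin n → ℝ) → Ω → Ω)
    (hact_cont : Continuous fun p : (Fin n → ℝ) × Ω => act p.1 p.2)
    (β β' : (Fin n → ℝ) →ₗ[ℝ] ℝ) (f g : C(Ω, Circle))
    (hf : ∀ (T : Ω) (v : Fin n → ℝ),
      (f (act v T) : ℂ) = Complex.exp (2 * Real.pi * Complex.I * (β v : ℝ)) * (f T : ℂ))
    (hg : ∀ (T : Ω) (v : Fin n → ℝ),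
      (g (act v T) : ℂ) = Complex.exp (2 * Real.pi * Complex.I * (β' v : ℝ)) * (g T : ℂ))
    (hne : β ≠ β') :
    ¬ f.Homotopic g := by
  intro hfg
  obtain ⟨φ, hφ⟩ := hfg.exists_circleExp_eq_div
  obtain ⟨v, hv⟩ : ∃ v, β v ≠ β' v := by
    contrapose! hne
    exact LinearMap.ext hne
  let T₀ := Classical.arbitrary Ω
  let ρ : ℝ → Ω := fun t => act (t • v) T₀
  have hρ : Continuous ρ :=
    hact_cont.comp ((continuous_id.smul continuous_const).prodMk continuous_const)
  have hwind : ∀ t,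
      Circle.exp (φ (ρ t)) = Circle.exp (2 * π * (β' v - β v) * t) * (g T₀ / f T₀) := by
    intro t
    rw [hφ, Circle.eq_exp_mul_of_coe_eq (hg T₀ _), Circle.eq_exp_mul_of_coe_eq (hf T₀ _),
      mul_div_mul_comm, ← Circle.exp_sub, map_smul, map_smul, smul_eq_mul, smul_eq_mul]
    ring_nf
  have hlin := eq_add_mul_of_circleExp_eq (φ.continuous.comp hρ) hwind
  refine not_bddAbove_range_add_mul (a := φ (ρ 0))
    (mul_ne_zero two_pi_pos.ne' (sub_ne_zero.2 hv.symm)) ?_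
  refine (isCompact_range φ.continuous).bddAbove.mono ?_
  rintro _ ⟨t, rfl⟩
  exact ⟨ρ t, hlin t⟩

/-- Let `Ω` be a nonempty compact metric space with a continuous `ℝⁿ`-action `(v, T) ↦ T − v`
(here `act v T`).  Let `f` be a continuous eigenfunction with eigenvalue `β` and `g` a
continuous eigenfunction with eigenvalue `β′`.  If `β ≠ β′` then `f` and `g` are not
homotopic as maps `Ω → S¹`.  (Injectivity of the map `θ` from the group of eigenvalues to
the first cohomology of `Ω`.) -/
theorem stmt3 {Ω : Type*} [MetricSpace Ω] [CompactSpace Ω] [Nonempty Ω] (n : ℕ)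
    (act : (Fin n → ℝ) → Ω → Ω)
    (hact_cont : Continuous fun p : (Fin n → ℝ) × Ω => act p.1 p.2)
    (hact_zero : ∀ T, act 0 T = T)
    (hact_add : ∀ v w T, act (v + w) T = act v (act w T))
    (β β' : (Fin n → ℝ) →ₗ[ℝ] ℝ) (f g : C(Ω, Circle))
    (hf : ∀ (T : Ω) (v : Fin n → ℝ),
      (f (act v T) : ℂ) = Complex.exp (2 * Real.pi * Complex.I * (β v : ℝ)) * (f T : ℂ))
    (hg : ∀ (T : Ω) (v : Fin n → ℝ),
      (g (act v T) : ℂ) = Complex.exp (2 * Real.pi * Complex.I * (β' v : ℝ)) * (g T : ℂ))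
    (hne : β ≠ β') :
    ¬ f.Homotopic g :=
  stmt3_general n act hact_cont β β' f g hf hg hne
end

section
/- Let Ω be a nonempty compact metric space equipped with a continuous action of ℝⁿ, written (v, T) ↦ T − v, and let μ be a Borel probability measure on Ω invariant under the action. Then the set of linear functionals β : ℝⁿ → ℝ for which there exists a continuous eigenfunction with eigenvalue β is countable. -/
/-!
Two continuous eigenfunctions `f, g` with distinct eigenvalues `β ≠ β'` are at uniform
distance at least `1`: choose `v` with `(β - β') v = 1/2`; then at `T` the values differ by
`f T - g T`, while at `T - v` they differ by a unimodular multiple of `f T + g T`, and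
`|a - b| + |a + b| ≥ 2` when `|a| = 1`. Since `C(Ω, S¹)` is separable, a `1`-separated
family in it is countable.
-/

theorem countable_of_pairwise_le_dist {ι E : Type*} [PseudoMetricSpace E]
    [TopologicalSpace.SeparableSpace E] {ε : ℝ} (hε : 0 < ε) (F : ι → E)
    (hF : Pairwise fun i j => ε ≤ dist (F i) (F j)) : Countable ι := by
  refine Pairwise.countable_of_isOpen_disjoint (s := fun i => Metric.ball (F i) (ε / 2))
    (fun i j hij => Metric.ball_disjoint_ball ?_) (fun _ => Metric.isOpen_ball)
    (fun _ => Metric.nonempty_ball.2 (half_pos hε))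
  linarith [hF hij]

theorem LinearMap.exists_sub_apply_eq {V : Type*} [AddCommGroup V] [Module ℝ V]
    {β β' : V →ₗ[ℝ] ℝ} (hne : β ≠ β') (c : ℝ) : ∃ v, β v - β' v = c :=
  LinearMap.surjective_of_ne_zero (sub_ne_zero.2 hne) c

theorem Complex.exp_two_pi_mul_I_mul_add_half (x : ℝ) :
    Complex.exp (2 * Real.pi * Complex.I * ((x + 1 / 2 : ℝ) : ℂ))
      = -Complex.exp (2 * Real.pi * Complex.I * (x : ℂ)) := by
  rw [← Complex.exp_add_pi_mul_I]
  push_cast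
  ring_nf

theorem Circle.two_le_norm_sub_add_norm_add (a : Circle) (b : ℂ) :
    2 ≤ ‖(a : ℂ) - b‖ + ‖(a : ℂ) + b‖ :=
  calc (2 : ℝ) = ‖((a : ℂ) - b) + ((a : ℂ) + b)‖ := by
        rw [sub_add_add_cancel, ← two_mul, norm_mul, Circle.norm_coe]; norm_num
    _ ≤ _ := norm_add_le _ _

section Eigenfunction

variable {X V : Type*} [TopologicalSpace X] [AddCommGroup V] [Module ℝ V]

/-- `act v T` stands for `T - v`. -/
def IsEigenfunction (act : V → X → X) (β : V →ₗ[ℝ] ℝ) (f : C(X, Circle)) : Prop :=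
  ∀ (T : X) (v : V),
    (f (act v T) : ℂ) = Complex.exp (2 * Real.pi * Complex.I * (β v : ℝ)) * (f T : ℂ)

theorem IsEigenfunction.one_le_dist [CompactSpace X] [Nonempty X] {act : V → X → X}
    {β β' : V →ₗ[ℝ] ℝ} {f g : C(X, Circle)} (hf : IsEigenfunction act β f)
    (hg : IsEigenfunction act β' g) (hne : β ≠ β') : 1 ≤ dist f g := by
  obtain ⟨v, hv⟩ := LinearMap.exists_sub_apply_eq hne.symm (1 / 2)
  obtain ⟨T⟩ := ‹Nonempty X›
  have norm_sub_le (x : X) : ‖(f x : ℂ) - g x‖ ≤ dist f g := by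
    rw [← Complex.dist_eq]
    exact ContinuousMap.dist_apply_le_dist (f := f) (g := g) x
  have hg_shift :
      (g (act v T) : ℂ) = -Complex.exp (2 * Real.pi * Complex.I * (β v : ℝ)) * g T := by
    rw [hg, show β' v = β v + 1 / 2 by linarith, Complex.exp_two_pi_mul_I_mul_add_half]
  have norm_add_le : ‖(f T : ℂ) + g T‖ ≤ dist f g :=
    calc ‖(f T : ℂ) + g T‖ = ‖(f (act v T) : ℂ) - g (act v T)‖ := by
          rw [hf, hg_shift, neg_mul, sub_neg_eq_add, ← mul_add, norm_mul, Complex.norm_exp]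
          simp
      _ ≤ dist f g := norm_sub_le _
  linarith [norm_sub_le T, Circle.two_le_norm_sub_add_norm_add (f T) (g T)]

theorem countable_setOf_isEigenfunction [CompactSpace X] [T2Space X]
    [SecondCountableTopology X] [Nonempty X] (act : V → X → X) :
    {β : V →ₗ[ℝ] ℝ | ∃ f, IsEigenfunction act β f}.Countable := by
  choose F hF using fun β : {β : V →ₗ[ℝ] ℝ | ∃ f, IsEigenfunction act β f} => β.2
  exact Set.countable_coe_iff.1 <| countable_of_pairwise_le_dist one_pos F
    fun β β' hne => (hF β).one_le_dist (hF β') (Subtype.coe_ne_coe.2 hne)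

end Eigenfunction

open MeasureTheory

theorem stmt5_general {Ω : Type*} [MetricSpace Ω] [CompactSpace Ω] [Nonempty Ω]
    (n : ℕ)
    (act : (Fin n → ℝ) → Ω → Ω) :
    Set.Countable {β : (Fin n → ℝ) →ₗ[ℝ] ℝ |
      ∃ f : C(Ω, Circle), ∀ (T : Ω) (v : Fin n → ℝ),
        (f (act v T) : ℂ) = Complex.exp (2 * Real.pi * Complex.I * (β v : ℝ)) * (f T : ℂ)} :=
  countable_setOf_isEigenfunction act

/-- Let `Ω` be a nonempty compact metric space with a continuous `ℝⁿ`-action `(v, T) ↦ T − v`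
(here `act v T`), and let `μ` be a Borel probability measure on `Ω` invariant under the
action.  Then the set of linear functionals `β : ℝⁿ → ℝ` for which there exists a continuous
eigenfunction with eigenvalue `β` is countable. -/
theorem stmt5 {Ω : Type*} [MetricSpace Ω] [CompactSpace Ω] [Nonempty Ω]
    [MeasurableSpace Ω] [BorelSpace Ω] (n : ℕ)
    (act : (Fin n → ℝ) → Ω → Ω)
    (hact_cont : Continuous fun p : (Fin n → ℝ) × Ω => act p.1 p.2)
    (hact_zero : ∀ T, act 0 T = T)
    (hact_add : ∀ v w T, act (v + w) T = act v (act w T))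
    (μ : Measure Ω) [IsProbabilityMeasure μ]
    (hinv : ∀ v : Fin n → ℝ, MeasurePreserving (act v) μ μ) :
    Set.Countable {β : (Fin n → ℝ) →ₗ[ℝ] ℝ |
      ∃ f : C(Ω, Circle), ∀ (T : Ω) (v : Fin n → ℝ),
        (f (act v T) : ℂ) = Complex.exp (2 * Real.pi * Complex.I * (β v : ℝ)) * (f T : ℂ)} :=
  stmt5_general n act
end

section
/- For a real number β, the distance from 3ⁿβ to the nearest integer tends to 0 as n → ∞ if and only if β ∈ ℤ[1/3], i.e. if and only if β = k/3ᵐ for some integer k and natural number m. -/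
/-!
Write `δₙ = bⁿβ - round (bⁿβ)`. The integer `round (bⁿ⁺¹β) - b · round (bⁿβ)` equals
`b δₙ - δₙ₊₁`, so once `δₙ → 0` it vanishes for large `n`, i.e. eventually `δₙ₊₁ = b δₙ`.
Since `|b| ≥ 1`, a sequence tending to `0` that is eventually multiplied by `b` at each step
is eventually `0`; hence `b^N β` is an integer for some `N`. Conversely, for `β = k / bᵐ`
the numbers `bⁿβ` are integers as soon as `n ≥ m`.
-/

open Filter Topology

lemma iInf_abs_sub_intCast_eq_abs_sub_round (x : ℝ) : ⨅ p : ℤ, |x - p| = |x - round x| :=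
  le_antisymm (ciInf_le ⟨0, by rintro _ ⟨p, rfl⟩; exact abs_nonneg _⟩ (round x))
    (le_ciInf (round_le x))

lemma eventually_eq_zero_of_tendsto_intCast {f : ℕ → ℤ}
    (h : Tendsto (fun n => (f n : ℝ)) atTop (𝓝 0)) : ∀ᶠ n in atTop, f n = 0 := by
  filter_upwards [h.eventually (Metric.ball_mem_nhds 0 one_pos)] with n hn
  rw [dist_zero_right, Real.norm_eq_abs, ← Int.cast_abs] at hn
  exact Int.abs_lt_one_iff.mp (by exact_mod_cast hn)

lemma eventually_eq_zero_of_tendsto_of_eventually_succ_eq_mul {δ : ℕ → ℝ} {b : ℝ}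
    (hb : 1 ≤ |b|) (hδ : Tendsto δ atTop (𝓝 0))
    (hrec : ∀ᶠ n in atTop, δ (n + 1) = b * δ n) : ∀ᶠ n in atTop, δ n = 0 := by
  obtain ⟨N, hN⟩ := eventually_atTop.mp hrec
  filter_upwards [eventually_ge_atTop N] with n hn
  have hgeom : ∀ j, δ (n + j) = b ^ j * δ n := by
    intro j
    induction j with
    | zero => simp
    | succ j ih => rw [← add_assoc, hN _ (by omega), ih, pow_succ]; ring
  have hle : ∀ j, |δ n| ≤ |δ (n + j)| := fun j => by
    rw [hgeom, abs_mul, abs_pow]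
    exact le_mul_of_one_le_left (abs_nonneg _) (one_le_pow₀ hb)
  have htail : Tendsto (fun j => |δ (n + j)|) atTop (𝓝 0) := by
    simpa [add_comm] using (hδ.comp (tendsto_add_atTop_nat n)).abs
  exact abs_nonpos_iff.mp (ge_of_tendsto htail (Eventually.of_forall hle))

lemma exists_pow_mul_eq_intCast_of_tendsto {b : ℤ} (hb : b ≠ 0) {β : ℝ}
    (h : Tendsto (fun n : ℕ => |(b : ℝ) ^ n * β - round ((b : ℝ) ^ n * β)|) atTop (𝓝 0)) :
    ∃ N : ℕ, (b : ℝ) ^ N * β = round ((b : ℝ) ^ N * β) := by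
  set δ : ℕ → ℝ := fun n => (b : ℝ) ^ n * β - round ((b : ℝ) ^ n * β) with hδ_def
  have hδ : Tendsto δ atTop (𝓝 0) := tendsto_zero_iff_abs_tendsto_zero δ |>.mpr h
  have hdiff : Tendsto (fun n => (b : ℝ) * δ n - δ (n + 1)) atTop (𝓝 0) := by
    simpa using (hδ.const_mul (b : ℝ)).sub (hδ.comp (tendsto_add_atTop_nat 1))
  have hrec : ∀ᶠ n in atTop, δ (n + 1) = b * δ n := by
    have hint := eventually_eq_zero_of_tendsto_intCast
      (f := fun n => round ((b : ℝ) ^ (n + 1) * β) - b * round ((b : ℝ) ^ n * β))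
      (hdiff.congr fun n => by simp only [hδ_def]; push_cast; ring)
    filter_upwards [hint] with n hn
    have hn' : ((round ((b : ℝ) ^ (n + 1) * β) - b * round ((b : ℝ) ^ n * β) : ℤ) : ℝ) = 0 := by
      exact_mod_cast hn
    push_cast at hn'
    simp only [hδ_def]
    linear_combination -hn'
  have hb' : (1 : ℝ) ≤ |(b : ℝ)| := by exact_mod_cast Int.one_le_abs hb
  obtain ⟨N, hN⟩ := (eventually_eq_zero_of_tendsto_of_eventually_succ_eq_mul hb' hδ hrec).exists
  exact ⟨N, sub_eq_zero.mp hN⟩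

theorem tendsto_abs_pow_mul_sub_round_iff {b : ℤ} (hb : b ≠ 0) (β : ℝ) :
    Tendsto (fun n : ℕ => |(b : ℝ) ^ n * β - round ((b : ℝ) ^ n * β)|) atTop (𝓝 0) ↔
      ∃ (k : ℤ) (m : ℕ), β = (k : ℝ) / (b : ℝ) ^ m := by
  constructor
  · intro h
    obtain ⟨N, hN⟩ := exists_pow_mul_eq_intCast_of_tendsto hb h
    exact ⟨round ((b : ℝ) ^ N * β), N, by rw [← hN]; field_simp⟩
  · rintro ⟨k, m, rfl⟩
    refine tendsto_const_nhds.congr' ?_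
    filter_upwards [eventually_ge_atTop m] with n hn
    have hint : (b : ℝ) ^ n * (k / (b : ℝ) ^ m) = ((b ^ (n - m) * k : ℤ) : ℝ) := by
      push_cast
      rw [← pow_sub_mul_pow (b : ℝ) hn]
      field_simp [pow_ne_zero m (Int.cast_ne_zero (α := ℝ) |>.mpr hb)]
    rw [hint, round_intCast, sub_self, abs_zero]

/-- For a real number `β`, the distance from `3ⁿβ` to the nearest integer tends to `0` as
`n → ∞` if and only if `β ∈ ℤ[1/3]`, i.e. iff `β = k/3ᵐ` for some integer `k` and natural
number `m`. -/
theorem stmt6 (β : ℝ) :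
    Filter.Tendsto (fun n : ℕ => ⨅ p : ℤ, |3 ^ n * β - (p : ℝ)|) Filter.atTop (nhds 0) ↔
      ∃ (k : ℤ) (m : ℕ), β = (k : ℝ) / 3 ^ m := by
  simpa only [iInf_abs_sub_intCast_eq_abs_sub_round, Int.cast_ofNat] using
    tendsto_abs_pow_mul_sub_round_iff (b := 3) (by norm_num) β
end

section
/- Every countable torsion-free abelian group E is isomorphic to the direct limit of a sequence E₁ → E₂ → E₃ → ⋯ of finitely generated free abelian groups with injective transition homomorphisms. -/
/-- Every countable torsion-free abelian group `E` is isomorphic to the direct limit of a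
sequence `E₁ → E₂ → E₃ → ⋯` of finitely generated free abelian groups (`Eᵢ = ℤ^{r i}`)
with injective transition homomorphisms. -/
theorem stmt8 (E : Type*) [AddCommGroup E] [Countable E]
    (htf : ∀ (x : E) (k : ℕ), k ≠ 0 → k • x = 0 → x = 0) :
    ∃ (r : ℕ → ℕ) (f : ∀ i j : ℕ, i ≤ j → (Fin (r i) → ℤ) →+ (Fin (r j) → ℤ)),
      DirectedSystem (fun i => Fin (r i) → ℤ) (fun i j h => f i j h) ∧
      (∀ (i j : ℕ) (h : i ≤ j), Function.Injective (f i j h)) ∧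
      Nonempty (AddCommGroup.DirectLimit (fun i => Fin (r i) → ℤ) f ≃+ E) := by
  haveI : NoZeroSMulDivisors ℤ E := by
    constructor
    intro c x h
    by_cases hc : c = 0
    · exact Or.inl hc
    · refine Or.inr (htf x c.natAbs (Int.natAbs_ne_zero.2 hc) ?_)
      have : (c.natAbs : ℤ) • x = 0 := by
        rcases Int.natAbs_eq c with h' | h'
        · rw [← h', h]
        · rw [← neg_neg ((c.natAbs : ℤ)), ← h', neg_smul, h, neg_zero]
      rwa [natCast_zsmul] at this
  obtain ⟨e, he⟩ := exists_surjective_nat E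
  set G : ℕ → Submodule ℤ E := fun n => Submodule.span ℤ (e '' Set.Iio n) with hG
  have hmono : Monotone G := fun i j hij =>
    Submodule.span_mono (Set.image_mono fun x hx => lt_of_lt_of_le hx hij)
  haveI hfin : ∀ n, Module.Finite ℤ (G n) := fun n => by
    rw [Module.Finite.iff_fg]
    exact Submodule.fg_span ((Set.finite_Iio n).image e)
  have hfree : ∀ n, ∃ r : ℕ, Nonempty ((G n) ≃ₗ[ℤ] (Fin r → ℤ)) := fun n => by
    obtain ⟨m, b⟩ := Module.basisOfFiniteTypeTorsionFree' (R := ℤ) (M := G n)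
    exact ⟨m, ⟨b.equivFun⟩⟩
  choose r φ using hfree
  let ψ : ∀ n, (G n) ≃ₗ[ℤ] (Fin (r n) → ℤ) := fun n => (φ n).some
  let f : ∀ i j : ℕ, i ≤ j → (Fin (r i) → ℤ) →+ (Fin (r j) → ℤ) := fun i j h =>
    ((ψ j).toLinearMap ∘ₗ Submodule.inclusion (hmono h) ∘ₗ (ψ i).symm.toLinearMap).toAddMonoidHom
  have hf : ∀ (i j : ℕ) (h : i ≤ j) (x : Fin (r i) → ℤ),
      f i j h x = ψ j (Submodule.inclusion (hmono h) ((ψ i).symm x)) := fun _ _ _ _ => rfl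
  have hsys : DirectedSystem (fun i => Fin (r i) → ℤ) (fun i j h => f i j h) := by
    constructor
    · intro i x
      show ψ i (Submodule.inclusion (hmono le_rfl) ((ψ i).symm x)) = x
      have : Submodule.inclusion (hmono (le_refl i)) ((ψ i).symm x) = (ψ i).symm x :=
        Subtype.ext rfl
      rw [this, LinearEquiv.apply_symm_apply]
    · intro k j i hij hjk x
      show ψ k (Submodule.inclusion (hmono hjk)
          ((ψ j).symm (ψ j (Submodule.inclusion (hmono hij) ((ψ i).symm x)))))
        = ψ k (Submodule.inclusion (hmono (hij.trans hjk)) ((ψ i).symm x))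
      rw [LinearEquiv.symm_apply_apply]
      congr 1
  have hinj : ∀ (i j : ℕ) (h : i ≤ j), Function.Injective (f i j h) := by
    intro i j h
    rw [show ⇑(f i j h) = ⇑(ψ j) ∘ ⇑(Submodule.inclusion (hmono h)) ∘ ⇑(ψ i).symm from rfl]
    exact (ψ j).injective.comp ((Submodule.inclusion_injective _).comp (ψ i).symm.injective)
  refine ⟨r, f, hsys, hinj, ?_⟩
  haveI := hsys
  let g : ∀ n, (Fin (r n) → ℤ) →+ E := fun n =>
    ((G n).subtype ∘ₗ (ψ n).symm.toLinearMap).toAddMonoidHom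
  have hg : ∀ (i j : ℕ) (hij : i ≤ j) (x : Fin (r i) → ℤ), g j (f i j hij x) = g i x := by
    intro i j hij x
    show ((ψ j).symm (ψ j (Submodule.inclusion (hmono hij) ((ψ i).symm x))) : E)
      = ((ψ i).symm x : E)
    rw [LinearEquiv.symm_apply_apply]
    rfl
  let Φ := AddCommGroup.DirectLimit.lift (fun i => Fin (r i) → ℤ) f E g hg
  have hΦinj : Function.Injective Φ :=
    AddCommGroup.DirectLimit.lift_injective _ _ _ fun n =>
      (G n).injective_subtype.comp (ψ n).symm.injective
  have hΦsurj : Function.Surjective Φ := by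
    intro x
    obtain ⟨m, rfl⟩ := he x
    have hx : e m ∈ G (m + 1) :=
      Submodule.subset_span ⟨m, Nat.lt_succ_self m, rfl⟩
    refine ⟨AddCommGroup.DirectLimit.of (fun i => Fin (r i) → ℤ) f (m + 1)
      (ψ (m + 1) ⟨e m, hx⟩), ?_⟩
    rw [show Φ = AddCommGroup.DirectLimit.lift (fun i => Fin (r i) → ℤ) f E g hg from rfl,
      AddCommGroup.DirectLimit.lift_of]
    show ((ψ (m + 1)).symm (ψ (m + 1) ⟨e m, hx⟩) : E) = e m
    rw [LinearEquiv.symm_apply_apply]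
  exact ⟨AddEquiv.ofBijective Φ ⟨hΦinj, hΦsurj⟩⟩
end

section
/- Let A be an N×N integer matrix, regarded as a ℚ-linear endomorphism of ℚᴺ. Let ER := ⋂ₙ Aⁿ(ℚᴺ) be the eventual range of A (equal to A^N(ℚᴺ)), on which A restricts to a linear automorphism. Set ER_ℤ := {v ∈ ER : Aⁿ v ∈ ℤᴺ for some n ∈ ℕ} and Σ := ER ∩ ℤᴺ. Let V ⊆ ER be a ℚ-subspace with A(V) = V, set V_ℤ := V ∩ ER_ℤ, let W := ER/V with quotient map π_W, let Γ := π_W(Σ), and let Ā : W → W be the automorphism induced by A. If det(Ā) = ±1, then there exists an additive group homomorphism s : ER_ℤ → V_ℤ with s(v) = v for all v ∈ V_ℤ; in particular V_ℤ is a direct summand of the abelian group ER_ℤ. -/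
/-!
The image `Γ = p(ER ∩ ℤᴺ)` is a lattice in `W`, i.e. a finitely generated `ℤ`-submodule spanning
`W` over `ℚ`, and `Ā` preserves it. In a `ℤ`-basis of `Γ` (which is also a `ℚ`-basis of `W`) the
matrix of `Ā` is integral with determinant `det Ā = ±1`, so `Ā` restricts to an automorphism of
`Γ`. Hence if `Aⁿ v` is integral then `p v = Ā⁻ⁿ p(Aⁿ v) ∈ Γ`, i.e. `p` maps `ER_ℤ` into `Γ`.
Subgroups of the free abelian group `Γ` are free, so `p : ER_ℤ → p(ER_ℤ)` splits by some `t`,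
and `x ↦ x - t (p x)` is a retraction of `ER_ℤ` onto `ker p ∩ ER_ℤ = V_ℤ`.
-/

open Module Submodule

theorem Module.End.apply_mem_iInf_range_pow {R M : Type*} [Semiring R] [AddCommMonoid M]
    [Module R M] (f : Module.End R M) {v : M} (hv : v ∈ ⨅ n : ℕ, LinearMap.range (f ^ n)) :
    f v ∈ ⨅ n : ℕ, LinearMap.range (f ^ n) := by
  rw [Submodule.mem_iInf] at hv ⊢
  intro n
  obtain ⟨w, rfl⟩ := hv n
  exact ⟨f w, by rw [← Module.End.mul_apply, ← pow_succ, pow_succ', Module.End.mul_apply]⟩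

theorem Module.End.pow_semiconj_apply_of_mapsTo {R M N : Type*} [Semiring R] [AddCommMonoid M]
    [Module R M] [AddCommMonoid N] [Module R N] {f : Module.End R M} {g : Module.End R N}
    (p : M →ₗ[R] N) {S : Set M} (hS : Set.MapsTo f S S) (h : ∀ v ∈ S, g (p v) = p (f v))
    (n : ℕ) : ∀ v ∈ S, (g ^ n) (p v) = p ((f ^ n) v) := by
  induction n with
  | zero => simp
  | succ n ih =>
    intro v hv
    rw [pow_succ, pow_succ, Module.End.mul_apply, Module.End.mul_apply, h v hv, ih (f v) (hS hv)]

theorem LinearMap.exists_retraction_ker {R M N : Type*} [Ring R] [AddCommGroup M] [Module R M]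
    [AddCommGroup N] [Module R N] (q : M →ₗ[R] N) [Module.Projective R (LinearMap.range q)] :
    ∃ s : M →ₗ[R] M, (∀ x, q (s x) = 0) ∧ ∀ x, q x = 0 → s x = x := by
  obtain ⟨t, ht⟩ := Module.projective_lifting_property q.rangeRestrict LinearMap.id
    q.surjective_rangeRestrict
  refine ⟨LinearMap.id - t ∘ₗ q.rangeRestrict, fun x => ?_, fun x hx => ?_⟩
  · have hqt : q (t (q.rangeRestrict x)) = q x :=
      congrArg Subtype.val (LinearMap.congr_fun ht (q.rangeRestrict x))
    simp [hqt]
  · have : q.rangeRestrict x = 0 := Subtype.ext hx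
    simp [this]

theorem Submodule.projective_of_le_of_fg {R V : Type*} [CommRing R] [IsDomain R]
    [IsPrincipalIdealRing R] [AddCommGroup V] [Module R V] [Module.IsTorsionFree R V]
    {M N : Submodule R V} (hM : M.FG) (hN : N ≤ M) : Module.Projective R N := by
  have : Module.Finite R M := Module.Finite.iff_fg.2 hM
  have : Module.Finite R N := Module.Finite.iff_fg.2 (FG.of_le_of_isNoetherian (T := M) hN)
  infer_instance

namespace Submodule.IsLattice

variable {R K V : Type*} [CommRing R] [Field K] [Algebra R K] [IsFractionRing R K]
  [AddCommGroup V] [Module K V] [Module R V] [IsScalarTower R K V] (M : Submodule R V)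
  [IsLattice K M]

theorem _root_.Module.Basis.extendOfIsLattice_repr_coe {κ : Type*} [Fintype κ]
    (b : Basis κ R M) (m : M) (k : κ) :
    (b.extendOfIsLattice K).repr m k = algebraMap R K (b.repr m k) := by
  have hm : (m : V) = ∑ i, algebraMap R K (b.repr m i) • b.extendOfIsLattice K i := by
    simp only [algebraMap_smul, Module.Basis.extendOfIsLattice_apply,
      ← Submodule.coe_smul_of_tower, ← Submodule.coe_sum, b.sum_repr]
  rw [hm, Module.Basis.repr_sum_self]

variable [IsDomain R] [IsPrincipalIdealRing R] {M} {f : V →ₗ[K] V} (hf : ∀ x ∈ M, f x ∈ M)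

theorem det_eq_algebraMap_det_restrict :
    LinearMap.det f = algebraMap R K (LinearMap.det ((f.restrictScalars R).restrict hf)) := by
  classical
  let b := Module.Free.chooseBasis R M
  let B := b.extendOfIsLattice K
  have hmat : LinearMap.toMatrix B B f =
      (LinearMap.toMatrix b b ((f.restrictScalars R).restrict hf)).map (algebraMap R K) := by
    ext i j
    rw [LinearMap.toMatrix_apply, Matrix.map_apply, LinearMap.toMatrix_apply,
      ← Module.Basis.extendOfIsLattice_repr_coe]
    simp only [B, Module.Basis.extendOfIsLattice_apply]
    rfl
  rw [← LinearMap.det_toMatrix B, hmat, ← LinearMap.det_toMatrix b, RingHom.map_det]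
  rfl

theorem mem_of_apply_mem (hdet : IsUnit (LinearMap.det ((f.restrictScalars R).restrict hf)))
    {x : V} (hx : f x ∈ M) : x ∈ M := by
  have : Module.Finite K V :=
    Module.Finite.of_basis ((Module.Free.chooseBasis R M).extendOfIsLattice K)
  have hinj : Function.Injective f := by
    refine ((Module.End.isUnit_iff f).1 ?_).1
    rw [LinearMap.isUnit_iff_isUnit_det, det_eq_algebraMap_det_restrict hf]
    exact hdet.map _
  obtain ⟨y, hy⟩ := ((Module.End.isUnit_iff _).1 ((LinearMap.isUnit_iff_isUnit_det _).2 hdet)).2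
    ⟨f x, hx⟩
  rw [← hinj (congrArg Subtype.val hy)]
  exact y.2

theorem mem_of_pow_apply_mem (hdet : IsUnit (LinearMap.det ((f.restrictScalars R).restrict hf)))
    {x : V} (n : ℕ) (hx : (f ^ n) x ∈ M) : x ∈ M := by
  induction n generalizing x with
  | zero => simpa using hx
  | succ n ih =>
    rw [pow_succ, Module.End.mul_apply] at hx
    exact mem_of_apply_mem hf hdet (ih hx)

end Submodule.IsLattice

theorem Submodule.IsLattice.isUnit_det_restrict_of_det_eq_one_or_neg_one {V : Type*}
    [AddCommGroup V] [Module ℚ V] {M : Submodule ℤ V} [IsLattice ℚ M] {f : V →ₗ[ℚ] V}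
    (hf : ∀ x ∈ M, f x ∈ M) (hdet : LinearMap.det f = 1 ∨ LinearMap.det f = -1) :
    IsUnit (LinearMap.det ((f.restrictScalars ℤ).restrict hf)) := by
  rw [det_eq_algebraMap_det_restrict hf, algebraMap_int_eq, eq_intCast] at hdet
  rw [Int.isUnit_iff]
  exact_mod_cast hdet

section IntegerPoints

variable (R K ι : Type*) [CommRing R] [Field K] [Algebra R K]

def integerPoints : Submodule R (ι → K) :=
  LinearMap.range ((Algebra.linearMap R K).compLeft ι)

variable {R K ι}

theorem mem_integerPoints {v : ι → K} :
    v ∈ integerPoints R K ι ↔ ∀ i, ∃ z : R, algebraMap R K z = v i := by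
  refine ⟨fun ⟨z, hz⟩ i => ⟨z i, congrFun hz i⟩, fun h => ?_⟩
  choose z hz using h
  exact ⟨z, funext hz⟩

theorem mem_integerPoints_int {v : ι → ℚ} :
    v ∈ integerPoints ℤ ℚ ι ↔ ∀ i, ∃ z : ℤ, v i = z := by
  simp only [mem_integerPoints, algebraMap_int_eq, eq_intCast, eq_comm]

theorem Matrix.toLin'_map_algebraMap_mem_integerPoints [Fintype ι] [DecidableEq ι]
    (A : Matrix ι ι R) {v : ι → K} (hv : v ∈ integerPoints R K ι) :
    Matrix.toLin' (A.map (algebraMap R K)) v ∈ integerPoints R K ι := by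
  obtain ⟨z, rfl⟩ := hv
  exact ⟨A.mulVec z, funext fun i => RingHom.map_mulVec (algebraMap R K) A z i⟩

theorem span_restrictScalars_inf_integerPoints [Finite ι] [IsFractionRing R K]
    (U : Submodule K (ι → K)) :
    span K ((U.restrictScalars R ⊓ integerPoints R K ι : Submodule R (ι → K)) : Set (ι → K)) =
      U := by
  have := Fintype.ofFinite ι
  refine le_antisymm (span_le.2 fun v hv => hv.1) fun v hv => ?_
  obtain ⟨⟨d, hd⟩, hdv⟩ := IsLocalization.exist_integer_multiples (nonZeroDivisors R) Finset.univ v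
  have hd0 : algebraMap R K d ≠ 0 := (IsLocalization.map_units K ⟨d, hd⟩).ne_zero
  have hmem : algebraMap R K d • v ∈ U.restrictScalars R ⊓ integerPoints R K ι := by
    refine ⟨U.smul_mem _ hv, mem_integerPoints.2 fun i => ?_⟩
    obtain ⟨z, hz⟩ := hdv i (Finset.mem_univ i)
    exact ⟨z, by simpa [Algebra.smul_def] using hz⟩
  have : v = (algebraMap R K d)⁻¹ • algebraMap R K d • v := by
    rw [smul_smul, inv_mul_cancel₀ hd0, one_smul]
  rw [this]
  exact smul_mem _ _ (subset_span hmem)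

theorem isLattice_map_restrictScalars_inf_integerPoints [Finite ι] [IsNoetherianRing R]
    [IsFractionRing R K] {W : Type*} [AddCommGroup W] [Module K W] [Module R W]
    [IsScalarTower R K W] {U : Submodule K (ι → K)} {p : (ι → K) →ₗ[K] W} (hp : U.map p = ⊤) :
    IsLattice K ((U.restrictScalars R ⊓ integerPoints R K ι).map (p.restrictScalars R)) where
  fg := by
    have : Module.Finite R (integerPoints R K ι) := Module.Finite.range _
    exact (FG.of_le_of_isNoetherian (T := integerPoints R K ι) inf_le_right).map _
  span_eq_top := by
    rw [Submodule.map_coe, LinearMap.coe_restrictScalars, span_image,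
      span_restrictScalars_inf_integerPoints, hp]

end IntegerPoints

theorem stmt9_general (N : ℕ) (W : Type*) [AddCommGroup W] [Module ℚ W]
    (A : Matrix (Fin N) (Fin N) ℤ)
    (φ : (Fin N → ℚ) →ₗ[ℚ] (Fin N → ℚ))
    (hφ : φ = Matrix.toLin' (A.map ((↑) : ℤ → ℚ)))
    (ER : Submodule ℚ (Fin N → ℚ))
    (hER : ER = ⨅ n : ℕ, LinearMap.range (φ ^ n))
    (V : Submodule ℚ (Fin N → ℚ))
    (ERZ VZ : AddSubgroup (Fin N → ℚ))
    (hERZ : (ERZ : Set (Fin N → ℚ)) =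
      {v | v ∈ ER ∧ ∃ n : ℕ, ∀ i, ∃ z : ℤ, (φ ^ n) v i = (z : ℚ)})
    (hVZ : (VZ : Set (Fin N → ℚ)) = (V : Set (Fin N → ℚ)) ∩ (ERZ : Set (Fin N → ℚ)))
    (p : (Fin N → ℚ) →ₗ[ℚ] W)
    (hp : Submodule.map p ER = ⊤)
    (hker : LinearMap.ker p ⊓ ER = V)
    (Abar : W →ₗ[ℚ] W)
    (hAbar : ∀ v ∈ ER, Abar (p v) = p (φ v))
    (hdet : LinearMap.det Abar = 1 ∨ LinearMap.det Abar = -1) :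
    ∃ s : ERZ →+ (Fin N → ℚ),
      (∀ x : ERZ, s x ∈ VZ) ∧ ∀ x : ERZ, (x : Fin N → ℚ) ∈ VZ → s x = (x : Fin N → ℚ) := by
  have hφER : Set.MapsTo φ ER ER := fun v hv =>
    hER ▸ Module.End.apply_mem_iInf_range_pow φ (hER ▸ hv)
  let Γ := (ER.restrictScalars ℤ ⊓ integerPoints ℤ ℚ (Fin N)).map (p.restrictScalars ℤ)
  have : IsLattice ℚ Γ := isLattice_map_restrictScalars_inf_integerPoints hp
  have hAbarΓ : ∀ w ∈ Γ, Abar w ∈ Γ := by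
    rintro _ ⟨v, ⟨hvER, hvint⟩, rfl⟩
    exact ⟨φ v, ⟨hφER hvER, hφ ▸ Matrix.toLin'_map_algebraMap_mem_integerPoints A hvint⟩,
      (hAbar v hvER).symm⟩
  have hpΓ : ∀ v ∈ ERZ, p v ∈ Γ := by
    intro v hv
    obtain ⟨hvER, n, hn⟩ := (Set.ext_iff.1 hERZ v).1 hv
    refine IsLattice.mem_of_pow_apply_mem hAbarΓ
      (IsLattice.isUnit_det_restrict_of_det_eq_one_or_neg_one hAbarΓ hdet) n ?_
    rw [Module.End.pow_semiconj_apply_of_mapsTo p hφER hAbar n v hvER]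
    refine ⟨(φ ^ n) v, ⟨?_, mem_integerPoints_int.2 hn⟩, rfl⟩
    show (φ ^ n) v ∈ ER
    rw [Module.End.coe_pow]
    exact hφER.iterate n hvER
  let q : ERZ →ₗ[ℤ] W := (p.restrictScalars ℤ) ∘ₗ ERZ.subtype.toIntLinearMap
  have : Module.IsTorsionFree ℤ W := Module.IsTorsionFree.trans_faithfulSMul ℤ ℚ W
  have : Module.Projective ℤ (LinearMap.range q) :=
    projective_of_le_of_fg IsLattice.fg (M := Γ) (by rintro _ ⟨x, rfl⟩; exact hpΓ x x.2)
  obtain ⟨s, hqs, hs⟩ := q.exists_retraction_ker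
  have hVZ_iff : ∀ v ∈ ERZ, v ∈ VZ ↔ p v = 0 := by
    intro v hv
    rw [← SetLike.mem_coe, hVZ, ← hker]
    simp [hv, ((Set.ext_iff.1 hERZ v).1 hv).1]
  exact ⟨ERZ.subtype.comp s.toAddMonoidHom, fun x => (hVZ_iff _ (s x).2).2 (hqs x),
    fun x hx => congrArg Subtype.val (hs x ((hVZ_iff x x.2).1 hx))⟩

/-- Let `A` be an `N×N` integer matrix, acting `ℚ`-linearly on `ℚᴺ` as `φ`.  Let
`ER = ⋂ₙ Aⁿ(ℚᴺ)` be the eventual range, `ER_ℤ = {v ∈ ER : Aⁿ v ∈ ℤᴺ for some n}`,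
`V ⊆ ER` a `ℚ`-subspace with `A(V) = V`, `V_ℤ = V ∩ ER_ℤ`, `W = ER/V` (presented here by a
linear map `p` with `p(ER) = W` and `ker p ∩ ER = V`), and `Ā : W → W` the automorphism
induced by `A`.  If `det(Ā) = ±1`, then there is an additive group homomorphism
`s : ER_ℤ → V_ℤ` with `s(v) = v` for all `v ∈ V_ℤ`; in particular `V_ℤ` is a direct summand
of `ER_ℤ`. -/
theorem stmt9 (N : ℕ) (W : Type*) [AddCommGroup W] [Module ℚ W] [FiniteDimensional ℚ W]
    (A : Matrix (Fin N) (Fin N) ℤ)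
    (φ : (Fin N → ℚ) →ₗ[ℚ] (Fin N → ℚ))
    (hφ : φ = Matrix.toLin' (A.map ((↑) : ℤ → ℚ)))
    (ER : Submodule ℚ (Fin N → ℚ))
    (hER : ER = ⨅ n : ℕ, LinearMap.range (φ ^ n))
    (V : Submodule ℚ (Fin N → ℚ)) (hVER : V ≤ ER)
    (hAV : Submodule.map φ V = V)
    (ERZ VZ : AddSubgroup (Fin N → ℚ))
    (hERZ : (ERZ : Set (Fin N → ℚ)) =
      {v | v ∈ ER ∧ ∃ n : ℕ, ∀ i, ∃ z : ℤ, (φ ^ n) v i = (z : ℚ)})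
    (hVZ : (VZ : Set (Fin N → ℚ)) = (V : Set (Fin N → ℚ)) ∩ (ERZ : Set (Fin N → ℚ)))
    (p : (Fin N → ℚ) →ₗ[ℚ] W)
    (hp : Submodule.map p ER = ⊤)
    (hker : LinearMap.ker p ⊓ ER = V)
    (Abar : W →ₗ[ℚ] W)
    (hAbar : ∀ v ∈ ER, Abar (p v) = p (φ v))
    (hdet : LinearMap.det Abar = 1 ∨ LinearMap.det Abar = -1) :
    ∃ s : ERZ →+ (Fin N → ℚ),
      (∀ x : ERZ, s x ∈ VZ) ∧ ∀ x : ERZ, (x : Fin N → ℚ) ∈ VZ → s x = (x : Fin N → ℚ) :=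
  stmt9_general N W A φ hφ ER hER V ERZ VZ hERZ hVZ p hp hker Abar hAbar hdet
end

section
/- Let A be the integer matrix [[1,2],[3,0]] (arising from the substitution a ↦ abb, b ↦ aaa) and let G := {v ∈ ℚ² : Aⁿ v ∈ ℤ² for some n ∈ ℕ}. Then G = {a·(1,1) + b·(−2,3) + c·(1,0) : a ∈ ℤ[1/3], b ∈ ℤ[1/2], c ∈ ℤ}. Moreover, the subgroup {a·(1,1) + b·(−2,3) : a ∈ ℤ[1/3], b ∈ ℤ[1/2]} has index 5 in G. -/
/-!
The matrix `A` has the eigenvectors `(1, 1)` and `(-2, 3)` with eigenvalues `3` and `-2`, so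
`Aⁿ` clears a denominator `3ᵐ` of the first coordinate and `2ᵖ` of the second, while `ℤ²` is
`A`-stable; this gives one inclusion. Conversely `G` is the union of the `A⁻ⁿ ℤ²`, and the right
hand side contains `ℤ²` and is stable under `A⁻¹`, because `A⁻¹ (1, 0) = (0, 1/2)` lies in it.

For the index, `G = H + ℤ (1, 0)` and `c • (1, 0) ∈ H` exactly when `5 ∣ c`: writing
`c • (1, 0) = a • (1, 1) + b • (-2, 3)` forces `a = -3b` and `c = -5b`, and `b` then lies in
`ℤ[1/2] ∩ ℤ[1/3] = ℤ`.
-/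

open Matrix

def zAdjoinInv (m : ℤ) : Subring ℚ where
  carrier := {q | ∃ n : ℕ, ∃ k : ℤ, (m : ℚ) ^ n * q = k}
  zero_mem' := ⟨0, 0, by simp⟩
  one_mem' := ⟨0, 1, by simp⟩
  add_mem' := by
    rintro q r ⟨n, k, hk⟩ ⟨n', k', hk'⟩
    exact ⟨n + n', m ^ n' * k + m ^ n * k', by push_cast; rw [← hk, ← hk']; ring⟩
  mul_mem' := by
    rintro q r ⟨n, k, hk⟩ ⟨n', k', hk'⟩
    exact ⟨n + n', k * k', by push_cast; rw [← hk, ← hk']; ring⟩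
  neg_mem' := by
    rintro q ⟨n, k, hk⟩
    exact ⟨n, -k, by push_cast; rw [← hk]; ring⟩

theorem mem_zAdjoinInv_iff {m : ℤ} (hm : m ≠ 0) {q : ℚ} :
    q ∈ zAdjoinInv m ↔ ∃ (k : ℤ) (n : ℕ), q = k / (m : ℚ) ^ n := by
  have hm' : (m : ℚ) ≠ 0 := Int.cast_ne_zero.2 hm
  constructor
  · rintro ⟨n, k, hk⟩
    exact ⟨k, n, by rw [← hk]; field_simp⟩
  · rintro ⟨k, n, rfl⟩
    exact ⟨n, k, by field_simp⟩

theorem inv_mem_zAdjoinInv (m : ℤ) : (m : ℚ)⁻¹ ∈ zAdjoinInv m :=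
  ⟨2, m, by rw [sq, mul_self_mul_inv]⟩

theorem zAdjoinInv_inf_eq_bot {m m' : ℤ} (h : IsCoprime m m') :
    zAdjoinInv m ⊓ zAdjoinInv m' = ⊥ := by
  refine le_antisymm ?_ bot_le
  rintro q ⟨⟨n, k, hk⟩, ⟨n', k', hk'⟩⟩
  obtain ⟨u, u', hu⟩ := h.pow (m := n) (n := n')
  have hu' : (u : ℚ) * (m : ℚ) ^ n + u' * (m' : ℚ) ^ n' = 1 := by exact_mod_cast hu
  refine Subring.mem_bot.2 ⟨u * k + u' * k', ?_⟩
  push_cast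
  rw [← hk, ← hk']
  linear_combination q * hu'

section EventuallyIntegral

variable {ι : Type*} [Fintype ι] [DecidableEq ι]

def intLattice (ι : Type*) : Set (ι → ℚ) := {v | ∀ i, ∃ z : ℤ, v i = z}

def eventuallyIntegral (A : Matrix ι ι ℚ) : Set (ι → ℚ) :=
  {v | ∃ n : ℕ, A ^ n *ᵥ v ∈ intLattice ι}

theorem pow_mulVec_of_mulVec_eq_smul {R : Type*} [CommRing R] {A : Matrix ι ι R} {e : ι → R}
    {c : R} (he : A *ᵥ e = c • e) (n : ℕ) : A ^ n *ᵥ e = c ^ n • e := by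
  induction n with
  | zero => simp
  | succ n ih => rw [pow_succ, ← mulVec_mulVec, he, mulVec_smul, ih, smul_smul, pow_succ']

theorem smul_mem_eventuallyIntegral {A : Matrix ι ι ℚ} {e : ι → ℚ} {c a : ℚ}
    (he : A *ᵥ e = c • e) (he' : e ∈ intLattice ι) {n : ℕ} {k : ℤ} (hk : c ^ n * a = k) :
    a • e ∈ eventuallyIntegral A := by
  refine ⟨n, fun i => ?_⟩
  obtain ⟨z, hz⟩ := he' i
  refine ⟨k * z, ?_⟩
  rw [mulVec_smul, pow_mulVec_of_mulVec_eq_smul he, smul_smul, Pi.smul_apply, hz, mul_comm a, hk,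
    smul_eq_mul, Int.cast_mul]

theorem intLattice_subset_eventuallyIntegral (A : Matrix ι ι ℚ) :
    intLattice ι ⊆ eventuallyIntegral A :=
  fun v hv => ⟨0, by simpa using hv⟩

theorem eventuallyIntegral_subset {A : Matrix ι ι ℚ} {S : Set (ι → ℚ)}
    (hS : intLattice ι ⊆ S) (hA : ∀ v, A *ᵥ v ∈ S → v ∈ S) : eventuallyIntegral A ⊆ S := by
  rintro v ⟨n, hn⟩
  induction n generalizing v with
  | zero => exact hS (by simpa using hn)
  | succ n ih => exact hA v (ih (by rwa [mulVec_mulVec, ← pow_succ]))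

end EventuallyIntegral

theorem AddSubgroup.relIndex_sup_zmultiples_eq {M : Type*} [AddCommGroup M] {H : AddSubgroup M}
    {x : M} {n : ℕ} (hx : ∀ c : ℤ, c • x ∈ H ↔ (n : ℤ) ∣ c) :
    H.relIndex (H ⊔ zmultiples x) = n := by
  have hcomap : H.comap (zmultiplesHom M x) = zmultiples (n : ℤ) := by
    ext c
    rw [mem_comap, zmultiplesHom_apply, hx, Int.mem_zmultiples_iff]
  rw [relIndex_sup_left, ← range_zmultiplesHom, ← index_comap, hcomap, Int.index_zmultiples,
    Int.natAbs_natCast]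

theorem Matrix.vec2_eta {α : Type*} (v : Fin 2 → α) : v = ![v 0, v 1] :=
  (FinVec.etaExpand_eq v).symm

theorem Matrix.vec2_eq_vec2_iff {α : Type*} {a₀ a₁ b₀ b₁ : α} :
    ![a₀, a₁] = ![b₀, b₁] ↔ a₀ = b₀ ∧ a₁ = b₁ := by
  simp [vecCons_inj]

namespace AbbAaa

abbrev A : Matrix (Fin 2) (Fin 2) ℚ := !![1, 2; 3, 0]

theorem mulVec_eq (v : Fin 2 → ℚ) : A *ᵥ v = ![v 0 + 2 * v 1, 3 * v 0] := by
  ext i; fin_cases i <;> simp [vecHead, vecTail]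

theorem mulVec_one_one : A *ᵥ ![1, 1] = (3 : ℚ) • ![1, 1] := by
  ext i; fin_cases i <;> norm_num

theorem mulVec_neg_two_three : A *ᵥ ![-2, 3] = (-2 : ℚ) • ![-2, 3] := by
  ext i; fin_cases i <;> norm_num

theorem eigen_combination (a b : ℚ) : a • ![1, 1] + b • ![-2, 3] = ![a - 2 * b, a + 3 * b] := by
  ext i; fin_cases i <;> simp <;> ring

theorem eigen_combination_add (a b c : ℚ) :
    a • ![1, 1] + b • ![-2, 3] + c • ![1, 0] = ![a - 2 * b + c, a + 3 * b] := by
  rw [eigen_combination, smul_vec2, vec2_add, smul_eq_mul, smul_eq_mul, mul_one, mul_zero,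
    add_zero]

theorem mem_zAdjoinInv_three {q : ℚ} : q ∈ zAdjoinInv 3 ↔ ∃ (k : ℤ) (m : ℕ), q = k / 3 ^ m := by
  simpa using mem_zAdjoinInv_iff (m := 3) (by norm_num)

theorem mem_zAdjoinInv_two {q : ℚ} : q ∈ zAdjoinInv 2 ↔ ∃ (k : ℤ) (m : ℕ), q = k / 2 ^ m := by
  simpa using mem_zAdjoinInv_iff (m := 2) (by norm_num)

def eigenSum : Set (Fin 2 → ℚ) :=
  {v | ∃ a ∈ zAdjoinInv 3, ∃ b ∈ zAdjoinInv 2, v = a • ![1, 1] + b • ![-2, 3]}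

def eigenSumAddInt : Set (Fin 2 → ℚ) :=
  {v | ∃ a ∈ zAdjoinInv 3, ∃ b ∈ zAdjoinInv 2, ∃ c : ℤ,
    v = a • ![1, 1] + b • ![-2, 3] + (c : ℚ) • ![1, 0]}

theorem eigenSum_eq : eigenSum =
    {v | ∃ a b : ℚ, (∃ (k : ℤ) (m : ℕ), a = (k : ℚ) / 3 ^ m) ∧
      (∃ (k : ℤ) (m : ℕ), b = (k : ℚ) / 2 ^ m) ∧ v = a • ![1, 1] + b • ![-2, 3]} := by
  ext v
  simp only [eigenSum, Set.mem_ofPred_eq, mem_zAdjoinInv_three, mem_zAdjoinInv_two]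
  aesop

theorem eigenSumAddInt_eq : eigenSumAddInt =
    {v | ∃ a b : ℚ, ∃ c : ℤ, (∃ (k : ℤ) (m : ℕ), a = (k : ℚ) / 3 ^ m) ∧
      (∃ (k : ℤ) (m : ℕ), b = (k : ℚ) / 2 ^ m) ∧
      v = a • ![1, 1] + b • ![-2, 3] + (c : ℚ) • ![1, 0]} := by
  ext v
  simp only [eigenSumAddInt, Set.mem_ofPred_eq, mem_zAdjoinInv_three, mem_zAdjoinInv_two]
  aesop

theorem intLattice_subset_eigenSumAddInt : intLattice (Fin 2) ⊆ eigenSumAddInt := by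
  intro v hv
  obtain ⟨z₀, hz₀⟩ := hv 0
  obtain ⟨z₁, hz₁⟩ := hv 1
  refine ⟨z₁, intCast_mem _ z₁, 0, zero_mem _, z₀ - z₁, ?_⟩
  rw [eigen_combination_add, vec2_eta v, hz₀, hz₁]
  push_cast
  exact vec2_eq (by ring) (by ring)

-- `A⁻¹ (1, 0) = (0, 1/2) = 2 • (1, 1) - 2⁻¹ • (-2, 3) - 3 • (1, 0)`.
theorem mem_eigenSumAddInt_of_mulVec_mem {v : Fin 2 → ℚ} (hv : A *ᵥ v ∈ eigenSumAddInt) :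
    v ∈ eigenSumAddInt := by
  obtain ⟨a, ha, b, hb, c, hAv⟩ := hv
  rw [mulVec_eq, eigen_combination_add, vec2_eq_vec2_iff] at hAv
  obtain ⟨h₀, h₁⟩ := hAv
  refine ⟨a * ((3 : ℤ) : ℚ)⁻¹ + ((2 * c : ℤ) : ℚ),
    add_mem (mul_mem ha (inv_mem_zAdjoinInv 3)) (intCast_mem _ _),
    -((b + c) * ((2 : ℤ) : ℚ)⁻¹), neg_mem (mul_mem (add_mem hb (intCast_mem _ c))
      (inv_mem_zAdjoinInv 2)), -3 * c, ?_⟩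
  rw [eigen_combination_add, vec2_eta v, vec2_eq_vec2_iff]
  push_cast
  constructor
  · linear_combination h₁ / 3
  · linear_combination (h₀ - h₁ / 3) / 2

theorem eigenSumAddInt_subset {G : AddSubgroup (Fin 2 → ℚ)}
    (hG : (G : Set (Fin 2 → ℚ)) = eventuallyIntegral A) : eigenSumAddInt ⊆ G := by
  have hmem : ∀ w ∈ eventuallyIntegral A, w ∈ G := fun w hw => by rwa [← SetLike.mem_coe, hG]
  rintro v ⟨a, ⟨m, k, hk⟩, b, ⟨p, l, hl⟩, c, rfl⟩
  have hk : (3 : ℚ) ^ m * a = k := by exact_mod_cast hk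
  have hl : (-2 : ℚ) ^ p * b = ((-1) ^ p * l : ℤ) := by
    push_cast
    rw [← hl, neg_pow]
    ring
  refine G.add_mem (G.add_mem (hmem _ ?_) (hmem _ ?_)) (hmem _ ?_)
  · exact smul_mem_eventuallyIntegral mulVec_one_one (fun i => ⟨1, by fin_cases i <;> simp⟩) hk
  · exact smul_mem_eventuallyIntegral mulVec_neg_two_three
      (fun i => by fin_cases i; exacts [⟨-2, by simp⟩, ⟨3, by simp⟩]) hl
  · exact intLattice_subset_eventuallyIntegral A
      (fun i => by fin_cases i; exacts [⟨c, by simp⟩, ⟨0, by simp⟩])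

theorem intCast_smul_mem_eigenSum_iff (c : ℤ) :
    (c : ℚ) • ![1, 0] ∈ eigenSum ↔ (5 : ℤ) ∣ c := by
  rw [smul_vec2, smul_eq_mul, smul_eq_mul, mul_one, mul_zero]
  constructor
  · rintro ⟨a, ha, b, hb, hc⟩
    obtain ⟨h₀, h₁⟩ := vec2_eq_vec2_iff.1 (hc.trans (eigen_combination a b))
    have hb₃ : b ∈ zAdjoinInv 3 := by
      have : b = -(a * ((3 : ℤ) : ℚ)⁻¹) := by push_cast; linear_combination -h₁ / 3
      exact this ▸ neg_mem (mul_mem ha (inv_mem_zAdjoinInv 3))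
    have hb : b ∈ zAdjoinInv 2 ⊓ zAdjoinInv 3 := ⟨hb, hb₃⟩
    rw [zAdjoinInv_inf_eq_bot (by norm_num [Int.isCoprime_iff_gcd_eq_one]),
      Subring.mem_bot] at hb
    obtain ⟨j, rfl⟩ := hb
    exact ⟨-j, by exact_mod_cast (by linear_combination h₀ - h₁ : (c : ℚ) = 5 * -j)⟩
  · rintro ⟨j, rfl⟩
    refine ⟨(3 * j : ℤ), intCast_mem _ _, (-j : ℤ), intCast_mem _ _, ?_⟩
    rw [eigen_combination]
    push_cast
    exact vec2_eq (by ring) (by ring)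

theorem eq_sup_zmultiples {G H : AddSubgroup (Fin 2 → ℚ)}
    (hG : (G : Set (Fin 2 → ℚ)) = eigenSumAddInt) (hH : (H : Set (Fin 2 → ℚ)) = eigenSum) :
    G = H ⊔ AddSubgroup.zmultiples ![1, 0] := by
  ext v
  rw [← SetLike.mem_coe, hG, AddSubgroup.mem_sup]
  simp only [← SetLike.mem_coe, hH, AddSubgroup.coe_zmultiples, Set.mem_range]
  constructor
  · rintro ⟨a, ha, b, hb, c, rfl⟩
    exact ⟨_, ⟨a, ha, b, hb, rfl⟩, _, ⟨c, Int.cast_smul_eq_zsmul ℚ c _⟩, rfl⟩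
  · rintro ⟨_, ⟨a, ha, b, hb, rfl⟩, _, ⟨c, rfl⟩, rfl⟩
    exact ⟨a, ha, b, hb, c, by rw [Int.cast_smul_eq_zsmul]⟩

end AbbAaa

/-- Let `A = [[1,2],[3,0]]` (substitution `a ↦ abb`, `b ↦ aaa`) and
`G = {v ∈ ℚ² : Aⁿ v ∈ ℤ² for some n}`.  Then
`G = {a·(1,1) + b·(−2,3) + c·(1,0) : a ∈ ℤ[1/3], b ∈ ℤ[1/2], c ∈ ℤ}`, and the subgroup
`{a·(1,1) + b·(−2,3) : a ∈ ℤ[1/3], b ∈ ℤ[1/2]}` has index `5` in `G`. -/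
theorem stmt11 (G H : AddSubgroup (Fin 2 → ℚ))
    (hG : (G : Set (Fin 2 → ℚ)) =
      {v | ∃ n : ℕ, ∀ i, ∃ z : ℤ, ((!![(1 : ℚ), 2; 3, 0]) ^ n).mulVec v i = (z : ℚ)})
    (hH : (H : Set (Fin 2 → ℚ)) =
      {v | ∃ a b : ℚ, (∃ (k : ℤ) (m : ℕ), a = (k : ℚ) / 3 ^ m) ∧
        (∃ (k : ℤ) (m : ℕ), b = (k : ℚ) / 2 ^ m) ∧ v = a • ![1, 1] + b • ![-2, 3]}) :
    (G : Set (Fin 2 → ℚ)) =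
      {v | ∃ a b : ℚ, ∃ c : ℤ, (∃ (k : ℤ) (m : ℕ), a = (k : ℚ) / 3 ^ m) ∧
        (∃ (k : ℤ) (m : ℕ), b = (k : ℚ) / 2 ^ m) ∧
        v = a • ![1, 1] + b • ![-2, 3] + (c : ℚ) • ![1, 0]} ∧
    H.relIndex G = 5 := by
  have hG' : (G : Set (Fin 2 → ℚ)) = eventuallyIntegral AbbAaa.A := hG
  have hGS : (G : Set (Fin 2 → ℚ)) = AbbAaa.eigenSumAddInt :=
    (hG' ▸ eventuallyIntegral_subset AbbAaa.intLattice_subset_eigenSumAddInt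
      fun _ => AbbAaa.mem_eigenSumAddInt_of_mulVec_mem).antisymm
    (AbbAaa.eigenSumAddInt_subset hG')
  have hHS : (H : Set (Fin 2 → ℚ)) = AbbAaa.eigenSum := hH.trans AbbAaa.eigenSum_eq.symm
  refine ⟨hGS.trans AbbAaa.eigenSumAddInt_eq, ?_⟩
  rw [AbbAaa.eq_sup_zmultiples hGS hHS]
  exact AddSubgroup.relIndex_sup_zmultiples_eq fun c => by
    rw [← Int.cast_smul_eq_zsmul ℚ, ← SetLike.mem_coe, hHS,
      AbbAaa.intCast_smul_mem_eigenSum_iff, Nat.cast_ofNat]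
end

section
/- Let A = [[1,2],[3,0]] and G := {v ∈ ℚ² : Aⁿ v ∈ ℤ² for some n ∈ ℕ}, and let τ : G → (1/5)·ℤ[1/3] be the surjective additive homomorphism τ(v₁, v₂) = (3v₁ + 2v₂)/5, where (1/5)·ℤ[1/3] = {k/(5·3ⁿ) : k ∈ ℤ, n ∈ ℕ}. There is no additive group homomorphism r : (1/5)·ℤ[1/3] → G with τ(r(x)) = x for all x; that is, the short exact sequence 0 → ker τ → G → (1/5)·ℤ[1/3] → 0 does not split. -/
/-!
`(1, -1)` is a left eigenvector of `A = !![1, 2; 3, 0]` for the eigenvalue `-2`, so `Aⁿ v ∈ ℤ²`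
forces `(-2)ⁿ (v₀ - v₁) ∈ ℤ`: on `G` the functional `v₀ - v₁` takes values in `ℤ[1/2]`.
For a splitting `r`, `r(1/5) = 3ᵐ r(1/(5·3ᵐ))`, so `r(1/5)₀ - r(1/5)₁` is divisible by every
power of `3` in `ℤ[1/2]` and hence vanishes. Together with `τ(r(1/5)) = 1/5` this gives
`r(1/5) = (1/5, 1/5)`, a right eigenvector for `3`, and `Aⁿ r(1/5) = (3ⁿ/5, 3ⁿ/5)` is never
integral.
-/

open Matrix

section Eigenvector

variable {ι R : Type*} [Fintype ι] [DecidableEq ι] [CommRing R] {M : Matrix ι ι R} {c : R}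

theorem pow_mulVec_of_mulVec_eq_smul_s14 {v : ι → R} (h : M *ᵥ v = c • v) (k : ℕ) :
    M ^ k *ᵥ v = c ^ k • v := by
  induction k with
  | zero => simp
  | succ k ih => rw [pow_succ, ← mulVec_mulVec, h, mulVec_smul, ih, smul_smul, pow_succ']

theorem vecMul_pow_of_vecMul_eq_smul {w : ι → R} (h : w ᵥ* M = c • w) (k : ℕ) :
    w ᵥ* M ^ k = c ^ k • w := by
  induction k with
  | zero => simp
  | succ k ih => rw [pow_succ, ← vecMul_vecMul, ih, smul_vecMul, h, smul_smul, pow_succ]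

theorem dotProduct_pow_mulVec_of_vecMul_eq_smul {w : ι → R} (h : w ᵥ* M = c • w) (k : ℕ)
    (v : ι → R) : w ⬝ᵥ M ^ k *ᵥ v = c ^ k * w ⬝ᵥ v := by
  rw [dotProduct_mulVec, vecMul_pow_of_vecMul_eq_smul h, smul_dotProduct, smul_eq_mul]

end Eigenvector

theorem eq_zero_of_forall_exists_pow_mul_eq_pow_mul_int {a : ℤ} {b : ℕ} (hb : 1 < b)
    (hab : IsCoprime a b) {s : ℚ} (h : ∀ m : ℕ, ∃ (n : ℕ) (c : ℤ), a ^ n * s = b ^ m * c) :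
    s = 0 := by
  by_contra hs
  set m := s.num.natAbs
  obtain ⟨n, c, hnc⟩ := h m
  have hnum_eq : (a : ℚ) ^ n * s.num = b ^ m * (c * s.den) := by
    rw [← s.mul_den_eq_num, ← mul_assoc, hnc, mul_assoc]
  have hnum : (b : ℤ) ^ m ∣ s.num :=
    hab.pow.symm.dvd_of_dvd_mul_left ⟨c * s.den, by exact_mod_cast hnum_eq⟩
  have hle : b ^ m ≤ m :=
    Nat.le_of_dvd (Int.natAbs_pos.mpr (Rat.num_ne_zero.mpr hs))
      (by simpa [Int.natAbs_pow] using Int.natAbs_dvd_natAbs.mpr hnum)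
  exact (Nat.lt_pow_self hb).not_ge hle

theorem one_neg_one_vecMul_eq_neg_two_smul :
    ![1, -1] ᵥ* !![(1 : ℚ), 2; 3, 0] = (-2 : ℚ) • ![1, -1] := by
  ext i; fin_cases i <;> norm_num [vecMul, dotProduct]

theorem mulVec_one_one_eq_three_smul :
    !![(1 : ℚ), 2; 3, 0] *ᵥ ![1, 1] = (3 : ℚ) • ![1, 1] := by
  ext i; fin_cases i <;> norm_num [mulVec, dotProduct]

theorem exists_int_eq_neg_two_pow_mul_sub {n : ℕ} {v : Fin 2 → ℚ}
    (hv : ∀ i, ∃ z : ℤ, (!![(1 : ℚ), 2; 3, 0] ^ n *ᵥ v) i = z) :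
    ∃ c : ℤ, (-2) ^ n * (v 0 - v 1) = c := by
  obtain ⟨z₀, hz₀⟩ := hv 0
  obtain ⟨z₁, hz₁⟩ := hv 1
  have h := dotProduct_pow_mulVec_of_vecMul_eq_smul one_neg_one_vecMul_eq_neg_two_smul n v
  simp only [dotProduct, Fin.sum_univ_two, hz₀, hz₁, cons_val_zero, cons_val_one,
    cons_val_fin_one, one_mul, neg_mul] at h
  exact ⟨z₀ - z₁, by push_cast; linarith⟩

theorem three_pow_div_five_ne_int (n : ℕ) (z : ℤ) : (3 : ℚ) ^ n / 5 ≠ z := by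
  intro h
  rw [div_eq_iff (by norm_num)] at h
  have h5 : (5 : ℤ) ∣ 3 ^ n := ⟨z, by rw [mul_comm]; exact_mod_cast h⟩
  exact absurd (Int.Prime.dvd_pow' (by norm_num) h5) (by norm_num)

/-- Let `A = [[1,2],[3,0]]`, `G = {v ∈ ℚ² : Aⁿ v ∈ ℤ² for some n}`, and let
`τ : G → (1/5)·ℤ[1/3]`, `τ(v₁,v₂) = (3v₁ + 2v₂)/5` be the surjective frequency
homomorphism, where `(1/5)·ℤ[1/3] = {k/(5·3ⁿ)}`.  There is no additive homomorphism
`r : (1/5)·ℤ[1/3] → G` with `τ(r(x)) = x` for all `x`; i.e. the short exact sequence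
`0 → ker τ → G → (1/5)·ℤ[1/3] → 0` does not split. -/
theorem stmt14 (G : AddSubgroup (Fin 2 → ℚ)) (F : AddSubgroup ℚ)
    (hG : (G : Set (Fin 2 → ℚ)) =
      {v | ∃ n : ℕ, ∀ i, ∃ z : ℤ, ((!![(1 : ℚ), 2; 3, 0]) ^ n).mulVec v i = (z : ℚ)})
    (hF : (F : Set ℚ) = {q | ∃ (k : ℤ) (m : ℕ), q = (k : ℚ) / (5 * 3 ^ m)}) :
    ¬ ∃ r : F →+ (Fin 2 → ℚ),
      (∀ x : F, r x ∈ G) ∧ ∀ x : F, (3 * r x 0 + 2 * r x 1) / 5 = (x : ℚ) := by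
  rintro ⟨r, hrG, hrτ⟩
  have hG' (x : F) : ∃ n : ℕ, ∀ i, ∃ z : ℤ, (!![(1 : ℚ), 2; 3, 0] ^ n *ᵥ r x) i = z :=
    (Set.ext_iff.mp hG (r x)).mp (hrG x)
  let x (m : ℕ) : F := ⟨1 / (5 * 3 ^ m), (Set.ext_iff.mp hF _).mpr ⟨1, m, by simp⟩⟩
  have hx (m : ℕ) : 3 ^ m • x m = x 0 := by ext; simp [x]
  have hδ : r (x 0) 0 - r (x 0) 1 = 0 := by
    refine eq_zero_of_forall_exists_pow_mul_eq_pow_mul_int (a := -2) (b := 3) (by norm_num)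
      (by norm_num [Int.isCoprime_iff_gcd_eq_one]) fun m => ?_
    obtain ⟨n, hn⟩ := hG' (x m)
    obtain ⟨c, hc⟩ := exists_int_eq_neg_two_pow_mul_sub hn
    refine ⟨n, c, ?_⟩
    rw [← hx m, map_nsmul]
    simp only [Pi.smul_apply, nsmul_eq_mul]
    push_cast
    rw [← hc]; ring
  have hv : r (x 0) = (1 / 5 : ℚ) • ![1, 1] := by
    have hτ := hrτ (x 0)
    rw [show ((x 0 : F) : ℚ) = 1 / 5 by simp [x]] at hτ
    ext i; fin_cases i <;> simp <;> linarith
  obtain ⟨n, hn⟩ := hG' (x 0)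
  obtain ⟨z, hz⟩ := hn 0
  rw [hv, mulVec_smul, pow_mulVec_of_mulVec_eq_smul_s14 mulVec_one_one_eq_three_smul] at hz
  exact three_pow_div_five_ne_int n z (by simpa [div_eq_inv_mul] using hz)
end

section
/- Let A = [[1,1],[2,0]] (period doubling) and G := {v ∈ ℚ² : Aⁿ v ∈ ℤ² for some n ∈ ℕ}. Then G is the internal direct sum of its subgroups V := {a·(1,1) : a ∈ ℤ[1/2]} and ℤ·(1,0); in particular G ≅ ℤ[1/2] ⊕ ℤ and the short exact sequence 0 → ℤ[1/2] → G → G/V → 0 splits, with G/V ≅ ℤ. -/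
lemma pd_pow_form (n : ℕ) : ∃ a b : ℤ,
    (!![(1 : ℚ), 1; 2, 0]) ^ n = !![(a : ℚ), 2 ^ n - a; b, 2 ^ n - b] ∧ a - b = (-1) ^ n := by
  induction n with
  | zero =>
    refine ⟨1, 0, ?_, by norm_num⟩
    ext i j
    fin_cases i <;> fin_cases j <;> simp [Matrix.one_apply]
  | succ n ih =>
    obtain ⟨a, b, hM, hab⟩ := ih
    refine ⟨2 ^ (n+1) - a, 2 ^ (n+1) - b, ?_, by rw [pow_succ]; omega⟩
    rw [pow_succ, hM]
    ext i j
    fin_cases i <;> fin_cases j <;>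
      simp [Matrix.mul_apply, Fin.sum_univ_two] <;> push_cast <;> ring

lemma pd_mem_iff (v : Fin 2 → ℚ) :
    (∃ n : ℕ, ∀ i, ∃ z : ℤ, ((!![(1 : ℚ), 1; 2, 0]) ^ n).mulVec v i = (z : ℚ)) ↔
    ((∃ M : ℤ, v 0 - v 1 = (M : ℚ)) ∧ ∃ (k : ℤ) (m : ℕ), v 1 = (k : ℚ) / 2 ^ m) := by
  constructor
  · rintro ⟨n, hn⟩
    obtain ⟨a, b, hM, hab⟩ := pd_pow_form n
    obtain ⟨z0, hz0⟩ := hn 0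
    obtain ⟨z1, hz1⟩ := hn 1
    rw [hM] at hz0 hz1
    simp [Matrix.mulVec, dotProduct, Fin.sum_univ_two] at hz0 hz1
    have hdiff : v 0 - v 1 = ((((-1) ^ n * (z0 - z1) : ℤ)) : ℚ) := by
      have h1 : ((z0 : ℚ) - z1) = ((a - b : ℤ) : ℚ) * (v 0 - v 1) := by
        push_cast; rw [← hz0, ← hz1]; ring
      rw [hab] at h1
      push_cast at h1 ⊢
      rcases neg_one_pow_eq_or ℚ n with h | h <;> rcases neg_one_pow_eq_or ℤ n with h' | h' <;>
        rw [h] at h1 ⊢ <;> push_cast [h'] <;> linarith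
    refine ⟨⟨_, hdiff⟩, ⟨z1 - b * ((-1) ^ n * (z0 - z1)), n, ?_⟩⟩
    have h2 : (2 : ℚ) ^ n * v 1 = (z1 : ℚ) - (b : ℚ) * (((-1) ^ n * (z0 - z1) : ℤ) : ℚ) := by
      rw [← hdiff]; linear_combination hz1
    rw [eq_div_iff (by positivity : ((2 : ℚ) ^ n) ≠ 0)]
    push_cast at h2 ⊢
    linarith
  · rintro ⟨⟨M, hMv⟩, k, m, hk⟩
    obtain ⟨a, b, hMat, hab⟩ := pd_pow_form m
    refine ⟨m, fun i => ?_⟩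
    rw [hMat]
    have hv0 : v 0 = v 1 + M := by linarith
    fin_cases i
    · refine ⟨a * M + k, ?_⟩
      simp [Matrix.mulVec, dotProduct, Fin.sum_univ_two, hv0, hk]
      field_simp
      ring
    · refine ⟨b * M + k, ?_⟩
      simp [Matrix.mulVec, dotProduct, Fin.sum_univ_two, hv0, hk]
      field_simp
      ring

/-- Let `A = [[1,1],[2,0]]` (period doubling) and `G = {v ∈ ℚ² : Aⁿ v ∈ ℤ² for some n}`.
Then `G` is the internal direct sum of `V = ℤ[1/2]·(1,1)` and `L = ℤ·(1,0)`; in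
particular `G ≅ ℤ[1/2] ⊕ ℤ`, and the short exact sequence
`0 → ℤ[1/2] → G → G/V → 0` splits, with `G/V ≅ ℤ`. -/
theorem stmt16 (G V L : AddSubgroup (Fin 2 → ℚ)) (Z2 : AddSubgroup ℚ)
    (hG : (G : Set (Fin 2 → ℚ)) =
      {v | ∃ n : ℕ, ∀ i, ∃ z : ℤ, ((!![(1 : ℚ), 1; 2, 0]) ^ n).mulVec v i = (z : ℚ)})
    (hV : (V : Set (Fin 2 → ℚ)) =
      {v | ∃ a : ℚ, (∃ (k : ℤ) (m : ℕ), a = (k : ℚ) / 2 ^ m) ∧ v = a • ![1, 1]})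
    (hL : (L : Set (Fin 2 → ℚ)) = {v | ∃ c : ℤ, v = (c : ℚ) • ![1, 0]})
    (hZ2 : (Z2 : Set ℚ) = {q | ∃ (k : ℤ) (m : ℕ), q = (k : ℚ) / 2 ^ m}) :
    V ⊓ L = ⊥ ∧ V ⊔ L = G ∧
      Nonempty (G ≃+ Z2 × ℤ) ∧
      Nonempty ((G ⧸ V.addSubgroupOf G) ≃+ ℤ) := by
  have hGmem : ∀ v : Fin 2 → ℚ, v ∈ G ↔
      ((∃ M : ℤ, v 0 - v 1 = (M : ℚ)) ∧ ∃ (k : ℤ) (m : ℕ), v 1 = (k : ℚ) / 2 ^ m) := by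
    intro v
    rw [← SetLike.mem_coe, hG]
    exact pd_mem_iff v
  have hVmem : ∀ v : Fin 2 → ℚ, v ∈ V ↔
      ∃ a : ℚ, (∃ (k : ℤ) (m : ℕ), a = (k : ℚ) / 2 ^ m) ∧ v = a • ![1, 1] := by
    intro v; rw [← SetLike.mem_coe, hV]; rfl
  have hLmem : ∀ v : Fin 2 → ℚ, v ∈ L ↔ ∃ c : ℤ, v = (c : ℚ) • ![1, 0] := by
    intro v; rw [← SetLike.mem_coe, hL]; rfl
  have hZ2mem : ∀ q : ℚ, q ∈ Z2 ↔ ∃ (k : ℤ) (m : ℕ), q = (k : ℚ) / 2 ^ m := by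
    intro q; rw [← SetLike.mem_coe, hZ2]; rfl
  -- V ≤ G
  have hVG : V ≤ G := by
    intro v hv
    obtain ⟨a, ⟨k, m, hk⟩, rfl⟩ := (hVmem v).1 hv
    rw [hGmem]
    refine ⟨⟨0, by simp⟩, k, m, by simp [hk]⟩
  -- L ≤ G
  have hLG : L ≤ G := by
    intro v hv
    obtain ⟨c, rfl⟩ := (hLmem v).1 hv
    rw [hGmem]
    exact ⟨⟨c, by simp⟩, 0, 0, by simp⟩
  -- part 1
  have part1 : V ⊓ L = ⊥ := by
    rw [eq_bot_iff]
    rintro v ⟨hv, hl⟩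
    obtain ⟨a, _, rfl⟩ := (hVmem v).1 hv
    obtain ⟨c, hc⟩ := (hLmem _).1 hl
    have h1 : a = 0 := by
      have := congrFun hc 1
      simpa using this
    simp [h1, AddSubgroup.mem_bot]
  -- part 2
  have part2 : V ⊔ L = G := by
    apply le_antisymm (sup_le hVG hLG)
    intro v hv
    obtain ⟨⟨M, hM⟩, k, m, hk⟩ := (hGmem v).1 hv
    rw [AddSubgroup.mem_sup]
    refine ⟨v 1 • ![1, 1], (hVmem _).2 ⟨v 1, ⟨k, m, hk⟩, rfl⟩,
      (M : ℚ) • ![1, 0], (hLmem _).2 ⟨M, rfl⟩, ?_⟩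
    funext i
    fin_cases i <;> simp <;> linarith
  refine ⟨part1, part2, ?_, ?_⟩
  · -- G ≃+ Z2 × ℤ
    refine ⟨AddEquiv.mk' ⟨fun v => (⟨v.1 1, (hZ2mem _).2 ((hGmem _).1 v.2).2⟩, ⌊v.1 0 - v.1 1⌋),
      fun p => ⟨![p.1.1 + p.2, p.1.1], (hGmem _).2 ⟨⟨p.2, by simp⟩,
        by simpa using (hZ2mem _).1 p.1.2⟩⟩, ?_, ?_⟩ ?_⟩
    · rintro ⟨v, hv⟩
      obtain ⟨⟨M, hM⟩, _⟩ := (hGmem v).1 hv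
      ext i
      fin_cases i <;> simp [hM, Int.floor_intCast] <;> linarith
    · rintro ⟨⟨q, hq⟩, n⟩
      ext <;> simp
    · rintro ⟨v, hv⟩ ⟨w, hw⟩
      obtain ⟨⟨M, hM⟩, _⟩ := (hGmem v).1 hv
      obtain ⟨⟨N, hN⟩, _⟩ := (hGmem w).1 hw
      ext
      · rfl
      · show ⌊(v + w) 0 - (v + w) 1⌋ = ⌊v 0 - v 1⌋ + ⌊w 0 - w 1⌋
        have : (v + w) 0 - (v + w) 1 = ((M + N : ℤ) : ℚ) := by
          simp [Pi.add_apply]; push_cast; linarith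
        rw [this, hM, hN]
        simp [Int.floor_intCast]
  · -- quotient
    set φ : G →+ ℤ :=
      { toFun := fun v => ⌊v.1 0 - v.1 1⌋
        map_zero' := by simp
        map_add' := by
          rintro ⟨v, hv⟩ ⟨w, hw⟩
          obtain ⟨⟨M, hM⟩, _⟩ := (hGmem v).1 hv
          obtain ⟨⟨N, hN⟩, _⟩ := (hGmem w).1 hw
          show ⌊(v + w) 0 - (v + w) 1⌋ = ⌊v 0 - v 1⌋ + ⌊w 0 - w 1⌋
          have : (v + w) 0 - (v + w) 1 = ((M + N : ℤ) : ℚ) := by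
            simp [Pi.add_apply]; push_cast; linarith
          rw [this, hM, hN]
          simp [Int.floor_intCast] } with hφ
    have hker : V.addSubgroupOf G = φ.ker := by
      ext ⟨v, hv⟩
      simp only [AddSubgroup.mem_addSubgroupOf, AddMonoidHom.mem_ker, hφ,
        AddMonoidHom.coe_mk, ZeroHom.coe_mk]
      constructor
      · intro hvV
        obtain ⟨a, _, rfl⟩ := (hVmem v).1 hvV
        simp
      · intro h0
        obtain ⟨⟨M, hM⟩, k, m, hk⟩ := (hGmem v).1 hv
        rw [hM, Int.floor_intCast] at h0
        have hM0 : (M : ℚ) = 0 := by rw [h0]; simp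
        have hv01 : v 0 = v 1 := by rw [hM0] at hM; linarith
        refine (hVmem v).2 ⟨v 1, ⟨k, m, hk⟩, ?_⟩
        funext i
        fin_cases i
        · simpa using hv01
        · simp
    have hsurj : Function.Surjective φ := by
      intro n
      refine ⟨⟨![(n : ℚ), 0], (hGmem _).2 ⟨⟨n, by simp⟩, 0, 0, by simp⟩⟩, ?_⟩
      show ⌊(![(n : ℚ), 0]) 0 - (![(n : ℚ), 0]) 1⌋ = n
      simp
    exact ⟨(QuotientAddGroup.quotientAddEquivOfEq hker).trans
      (QuotientAddGroup.quotientKerEquivOfSurjective φ hsurj)⟩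
end

section
/- Let à be the integer matrix [[0,1],[2,1]] (arising from the Thue–Morse substitution 1 ↦ 1 1̄, 1̄ ↦ 1̄ 1 on collared tiles) and let G := {v ∈ ℚ² : Ãⁿ v ∈ ℤ² for some n ∈ ℕ}. Then G = {a·(1,2) + b·(1,−1) + c·(1,0) : a ∈ ℤ[1/2], b, c ∈ ℤ}, and moreover G is the internal direct sum of its subgroups V := {a·(1,2) : a ∈ ℤ[1/2]} and ℤ·(0,1); in particular G ≅ ℤ[1/2] ⊕ ℤ. -/
/-!
In the coordinates `(x, y) = (v₀, v₁ - 2 v₀)`, an integral change of basis to `(1, 2), (0, 1)`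
with integral inverse, `Ã` becomes triangular, `(x, y) ↦ (2x + y, -y)`, so `Ãⁿ` acts by
`(x, y) ↦ (2ⁿ x + Jₙ y, (-1)ⁿ y)` with `Jₙ` the (integral) Jacobsthal numbers. Hence `Ãⁿ v` is
integral iff `y ∈ ℤ` and `2ⁿ x ∈ ℤ`: in these coordinates `G` is `ℤ[1/2] × ℤ`, while `V` and
`ℤ·(0, 1)` are `ℤ[1/2] × 0` and `0 × ℤ`.
-/

open Matrix

local notation "Ã" => !![(0 : ℚ), 1; 2, 1]

namespace AddSubgroup

variable {M N P : Type*} [AddGroup M] [AddGroup N] [AddGroup P] (e : M ≃+ N × P)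
  (A : AddSubgroup N) (B : AddSubgroup P)

theorem comap_prod_bot_inf_comap_bot_prod :
    (A.prod ⊥).comap e.toAddMonoidHom ⊓ ((⊥ : AddSubgroup N).prod B).comap e.toAddMonoidHom =
      ⊥ := by
  refine eq_bot_iff.2 fun v hv => ?_
  rw [mem_inf, mem_comap, mem_comap, mem_prod, mem_prod, mem_bot, mem_bot] at hv
  exact mem_bot.2 (e.map_eq_zero_iff.1 (Prod.ext hv.2.1 hv.1.2))

theorem comap_prod_bot_sup_comap_bot_prod :
    (A.prod ⊥).comap e.toAddMonoidHom ⊔ ((⊥ : AddSubgroup N).prod B).comap e.toAddMonoidHom =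
      (A.prod B).comap e.toAddMonoidHom := by
  refine le_antisymm (sup_le (comap_mono (prod_mono le_rfl bot_le))
    (comap_mono (prod_mono bot_le le_rfl))) fun v hv => ?_
  rw [mem_comap, mem_prod] at hv
  have hsplit : v = e.symm ((e v).1, 0) + e.symm (0, (e v).2) := by
    rw [← map_add, Prod.mk_add_mk, add_zero, zero_add, Prod.mk.eta, AddEquiv.symm_apply_apply]
  rw [hsplit]
  exact add_mem_sup (by simpa [mem_prod] using hv.1) (by simpa [mem_prod] using hv.2)

def comapProdEquiv : (A.prod B).comap e.toAddMonoidHom ≃+ A × B :=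
  (e.addSubgroupMap _).trans <|
    (AddEquiv.addSubgroupCongr (map_comap_eq_self_of_surjective e.surjective _)).trans
      (prodEquiv A B)

section Ring

variable {R : Type*}

theorem mem_zmultiples_one_iff_exists_eq_intCast [AddGroupWithOne R] {q : R} :
    q ∈ zmultiples (1 : R) ↔ ∃ z : ℤ, q = z := by
  simp [mem_zmultiples_iff, eq_comm]

variable (R) in
noncomputable def zmultiplesOneEquivInt [AddGroupWithOne R] [CharZero R] :
    zmultiples (1 : R) ≃+ ℤ :=
  ((AddMonoidHom.ofInjective (f := Int.castAddHom R) Int.cast_injective).trans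
    (AddEquiv.addSubgroupCongr Int.range_castAddHom)).symm

theorem intCast_mul_mem [Ring R] (H : AddSubgroup R) (z : ℤ) {y : R}
    (hy : y ∈ H) : (z : R) * y ∈ H := by
  simpa only [zsmul_eq_mul] using H.zsmul_mem hy z

theorem neg_one_pow_mul_mem_iff [Ring R] (H : AddSubgroup R) (n : ℕ)
    {y : R} : (-1) ^ n * y ∈ H ↔ y ∈ H := by
  rcases neg_one_pow_eq_or R n with h | h <;> simp [h]

end Ring

end AddSubgroup

open AddSubgroup

def dyadic : AddSubgroup ℚ where
  carrier := {q | ∃ (k : ℤ) (m : ℕ), q = k / 2 ^ m}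
  zero_mem' := ⟨0, 0, by simp⟩
  add_mem' := by
    rintro _ _ ⟨k, m, rfl⟩ ⟨l, n, rfl⟩
    refine ⟨k * 2 ^ n + l * 2 ^ m, m + n, ?_⟩
    push_cast
    field_simp
    ring
  neg_mem' := by
    rintro _ ⟨k, m, rfl⟩
    exact ⟨-k, m, by push_cast; ring⟩

theorem intCast_mem_dyadic (z : ℤ) : (z : ℚ) ∈ dyadic := ⟨z, 0, by simp⟩

theorem mem_dyadic_iff_exists_two_pow_mul_mem {q : ℚ} :
    q ∈ dyadic ↔ ∃ n : ℕ, 2 ^ n * q ∈ zmultiples (1 : ℚ) := by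
  simp_rw [mem_zmultiples_one_iff_exists_eq_intCast]
  refine ⟨fun ⟨k, m, hq⟩ => ⟨m, k, ?_⟩, fun ⟨n, k, hk⟩ => ⟨k, n, ?_⟩⟩
  · rw [hq]
    field_simp
  · rw [← hk]
    field_simp

def thueMorseCoord : (Fin 2 → ℚ) ≃+ ℚ × ℚ where
  toFun v := (v 0, v 1 - 2 * v 0)
  invFun p := ![p.1, p.2 + 2 * p.1]
  left_inv v := by ext i; fin_cases i <;> simp
  right_inv p := by simp
  map_add' v w := Prod.ext rfl (by simp only [Pi.add_apply, Prod.snd_add]; ring)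

@[simp]
theorem thueMorseCoord_apply (v : Fin 2 → ℚ) :
    thueMorseCoord v = (v 0, v 1 - 2 * v 0) := rfl

def jacobsthal : ℕ → ℤ
  | 0 => 0
  | n + 1 => 2 * jacobsthal n + (-1) ^ n

theorem thueMorse_mulVec (v : Fin 2 → ℚ) : Ã *ᵥ v = ![v 1, 2 * v 0 + v 1] := by
  ext i
  fin_cases i <;> simp [dotProduct, Fin.sum_univ_two]

theorem thueMorseCoord_mulVec (v : Fin 2 → ℚ) :
    thueMorseCoord (Ã *ᵥ v) =
      (2 * (thueMorseCoord v).1 + (thueMorseCoord v).2, -(thueMorseCoord v).2) := by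
  simp only [thueMorse_mulVec, thueMorseCoord_apply, cons_val_zero, cons_val_one]
  congr 1 <;> ring

theorem thueMorseCoord_pow_mulVec (n : ℕ) (v : Fin 2 → ℚ) :
    thueMorseCoord (Ã ^ n *ᵥ v) =
      (2 ^ n * (thueMorseCoord v).1 + jacobsthal n * (thueMorseCoord v).2,
        (-1) ^ n * (thueMorseCoord v).2) := by
  induction n with
  | zero => simp [jacobsthal]
  | succ n ih =>
    rw [pow_succ', ← mulVec_mulVec, thueMorseCoord_mulVec, ih]
    ext <;> push_cast [jacobsthal] <;> ring

theorem forall_mem_zmultiples_one_iff_thueMorseCoord_mem (w : Fin 2 → ℚ) :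
    (∀ i, w i ∈ zmultiples (1 : ℚ)) ↔
      thueMorseCoord w ∈ (zmultiples (1 : ℚ)).prod (zmultiples 1) := by
  rw [Fin.forall_fin_two, thueMorseCoord_apply, mem_prod]
  refine and_congr_right fun h0 => ?_
  have h2 : 2 * w 0 ∈ zmultiples (1 : ℚ) := by exact_mod_cast intCast_mul_mem _ 2 h0
  rw [sub_eq_add_neg, add_mem_cancel_right (neg_mem h2)]

theorem mem_comap_thueMorseCoord_iff (v : Fin 2 → ℚ) :
    v ∈ (dyadic.prod (zmultiples 1)).comap thueMorseCoord.toAddMonoidHom ↔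
      ∃ n : ℕ, ∀ i, ∃ z : ℤ, (Ã ^ n *ᵥ v) i = z := by
  simp_rw [← mem_zmultiples_one_iff_exists_eq_intCast,
    forall_mem_zmultiples_one_iff_thueMorseCoord_mem, thueMorseCoord_pow_mulVec, mem_comap,
    AddEquiv.coe_toAddMonoidHom, mem_prod, mem_dyadic_iff_exists_two_pow_mul_mem,
    neg_one_pow_mul_mem_iff]
  constructor
  · rintro ⟨⟨n, hx⟩, hy⟩
    exact ⟨n, add_mem hx (intCast_mul_mem _ _ hy), hy⟩
  · rintro ⟨n, hx, hy⟩
    exact ⟨⟨n, (add_mem_cancel_right (intCast_mul_mem _ _ hy)).1 hx⟩, hy⟩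

theorem thueMorseCoord_smul_eigenvector (a : ℚ) : thueMorseCoord (a • ![1, 2]) = (a, 0) := by
  simp [mul_comm]

theorem thueMorseCoord_smul_single_one (c : ℚ) : thueMorseCoord (c • ![0, 1]) = (0, c) := by
  simp

theorem coe_comap_thueMorseCoord_prod_bot :
    ((dyadic.prod ⊥).comap thueMorseCoord.toAddMonoidHom : Set (Fin 2 → ℚ)) =
      {v | ∃ a : ℚ, (∃ (k : ℤ) (m : ℕ), a = k / 2 ^ m) ∧ v = a • ![1, 2]} := by
  ext v
  simp only [SetLike.mem_coe, mem_comap, AddEquiv.coe_toAddMonoidHom, mem_prod, mem_bot,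
    Set.mem_ofPred_eq]
  constructor
  · rintro ⟨h0, h1⟩
    refine ⟨_, h0, thueMorseCoord.injective ?_⟩
    rw [thueMorseCoord_smul_eigenvector, ← h1]
  · rintro ⟨a, ha, rfl⟩
    rw [thueMorseCoord_smul_eigenvector]
    exact ⟨ha, rfl⟩

theorem coe_comap_thueMorseCoord_bot_prod :
    (((⊥ : AddSubgroup ℚ).prod (zmultiples 1)).comap thueMorseCoord.toAddMonoidHom :
      Set (Fin 2 → ℚ)) = {v | ∃ c : ℤ, v = (c : ℚ) • ![0, 1]} := by
  ext v
  simp only [SetLike.mem_coe, mem_comap, AddEquiv.coe_toAddMonoidHom, mem_prod, mem_bot,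
    mem_zmultiples_one_iff_exists_eq_intCast, Set.mem_ofPred_eq]
  constructor
  · rintro ⟨h0, c, hc⟩
    refine ⟨c, thueMorseCoord.injective ?_⟩
    rw [thueMorseCoord_smul_single_one, ← h0, ← hc]
  · rintro ⟨c, rfl⟩
    rw [thueMorseCoord_smul_single_one]
    exact ⟨rfl, c, rfl⟩

theorem thueMorseCoord_smul_add_smul_add_smul (a b c : ℚ) :
    thueMorseCoord (a • ![1, 2] + b • ![1, -1] + c • ![1, 0]) = (a + b + c, -3 * b - 2 * c) := by
  simp only [thueMorseCoord_apply, Pi.add_apply, Pi.smul_apply, smul_eq_mul, cons_val_zero,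
    cons_val_one]
  congr 1 <;> ring

theorem coe_comap_thueMorseCoord_prod :
    ((dyadic.prod (zmultiples 1)).comap thueMorseCoord.toAddMonoidHom : Set (Fin 2 → ℚ)) =
      {v | ∃ (a : ℚ) (b c : ℤ), (∃ (k : ℤ) (m : ℕ), a = (k : ℚ) / 2 ^ m) ∧
        v = a • ![1, 2] + (b : ℚ) • ![1, -1] + (c : ℚ) • ![1, 0]} := by
  ext v
  simp only [SetLike.mem_coe, mem_comap, AddEquiv.coe_toAddMonoidHom, mem_prod,
    mem_zmultiples_one_iff_exists_eq_intCast, Set.mem_ofPred_eq]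
  constructor
  · rintro ⟨h0, z, hz⟩
    refine ⟨(thueMorseCoord v).1, -z, z, h0, thueMorseCoord.injective ?_⟩
    rw [thueMorseCoord_smul_add_smul_add_smul]
    exact Prod.ext (by push_cast; ring) (by rw [hz]; push_cast; ring)
  · rintro ⟨a, b, c, ha, rfl⟩
    rw [thueMorseCoord_smul_add_smul_add_smul]
    exact ⟨add_mem (add_mem ha (intCast_mem_dyadic b)) (intCast_mem_dyadic c),
      -3 * b - 2 * c, by push_cast; ring⟩

/-- Let `Ã = [[0,1],[2,1]]` (Thue–Morse on collared tiles) and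
`G = {v ∈ ℚ² : Ãⁿ v ∈ ℤ² for some n}`.  Then
`G = {a·(1,2) + b·(1,−1) + c·(1,0) : a ∈ ℤ[1/2], b, c ∈ ℤ}`, and `G` is the internal
direct sum of `V = ℤ[1/2]·(1,2)` and `L = ℤ·(0,1)`; in particular `G ≅ ℤ[1/2] ⊕ ℤ`. -/
theorem stmt18 (G V L : AddSubgroup (Fin 2 → ℚ)) (Z2 : AddSubgroup ℚ)
    (hG : (G : Set (Fin 2 → ℚ)) =
      {v | ∃ n : ℕ, ∀ i, ∃ z : ℤ, ((!![(0 : ℚ), 1; 2, 1]) ^ n).mulVec v i = (z : ℚ)})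
    (hV : (V : Set (Fin 2 → ℚ)) =
      {v | ∃ a : ℚ, (∃ (k : ℤ) (m : ℕ), a = (k : ℚ) / 2 ^ m) ∧ v = a • ![1, 2]})
    (hL : (L : Set (Fin 2 → ℚ)) = {v | ∃ c : ℤ, v = (c : ℚ) • ![0, 1]})
    (hZ2 : (Z2 : Set ℚ) = {q | ∃ (k : ℤ) (m : ℕ), q = (k : ℚ) / 2 ^ m}) :
    (G : Set (Fin 2 → ℚ)) =
      {v | ∃ (a : ℚ) (b c : ℤ), (∃ (k : ℤ) (m : ℕ), a = (k : ℚ) / 2 ^ m) ∧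
        v = a • ![1, 2] + (b : ℚ) • ![1, -1] + (c : ℚ) • ![1, 0]} ∧
    V ⊓ L = ⊥ ∧ V ⊔ L = G ∧ Nonempty (G ≃+ Z2 × ℤ) := by
  obtain rfl : Z2 = dyadic := SetLike.coe_injective hZ2
  obtain rfl : G = (dyadic.prod (zmultiples 1)).comap thueMorseCoord.toAddMonoidHom :=
    SetLike.coe_injective (hG.trans (Set.ext fun v => (mem_comap_thueMorseCoord_iff v).symm))
  obtain rfl := SetLike.coe_injective (hV.trans coe_comap_thueMorseCoord_prod_bot.symm)
  obtain rfl := SetLike.coe_injective (hL.trans coe_comap_thueMorseCoord_bot_prod.symm)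
  exact ⟨coe_comap_thueMorseCoord_prod, comap_prod_bot_inf_comap_bot_prod _ _ _,
    comap_prod_bot_sup_comap_bot_prod _ _ _,
    ⟨(comapProdEquiv _ _ _).trans ((AddEquiv.refl _).prodCongr (zmultiplesOneEquivInt ℚ))⟩⟩
end
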